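/- arXiv:2207.05871 — 11 statements merged into one kernel-verified Lean document; each statement's English description precedes it below -/
import Mathlib

section
/- With the shifting construction f' defined from f (f'(x) = 2p_1 f(x) + (1-2p_1) f(x^1) when x_1 = 1, f'(x) = f(x) when x_1 = -1) and μ' the product measure obtained from μ = μ_p by replacing p_1 with 1/2, for every x ∈ {-1,1}^r we have μ'(x^1)f'(x^1) + μ'(x)f'(x) = μ(x^1)f(x^1) + μ(x)f(x). -/
open Finset

noncomputable section

/-- The ±1 value of a Boolean coordinate. -/
def sgn (b : Bool) : ℝ := if b then 1 else -1

/-- Weight of a point of the cube `{-1,1}^r` under the product measure with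
`P(x_i = 1) = p i`. -/
def wt {r : ℕ} (p : Fin r → ℝ) (x : Fin r → Bool) : ℝ :=
  ∏ i, if x i then p i else 1 - p i

/-- Expectation of `f` under the product measure `μ_p`. -/
def Ex {r : ℕ} (p : Fin r → ℝ) (f : (Fin r → Bool) → ℝ) : ℝ :=
  ∑ x : Fin r → Bool, wt p x * f x

/-- Conditional expectation `E_{μ_p}[f | x_i = b]`. -/
def condEx {r : ℕ} (p : Fin r → ℝ) (f : (Fin r → Bool) → ℝ) (i : Fin r) (b : Bool) : ℝ :=
  (∑ x : Fin r → Bool, if x i = b then wt p x * f x else 0) / (if b then p i else 1 - p i)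

/-- The uniform product measure (each `p i = 1/2`). -/
def half (r : ℕ) : Fin r → ℝ := fun _ => 1 / 2

/-- `S x = Σ_i x_i` with coordinates interpreted as ±1. -/
def S {r : ℕ} (x : Fin r → Bool) : ℝ := ∑ i, sgn (x i)

/-- `x^1`: flip the first coordinate. -/
def flip1 {r : ℕ} (x : Fin (r+1) → Bool) : Fin (r+1) → Bool :=
  Function.update x 0 (!(x 0))

lemma wt_succ {r : ℕ} (p : Fin (r+1) → ℝ) (x : Fin (r+1) → Bool) :
    wt p x = (if x 0 then p 0 else 1 - p 0) * wt (Fin.tail p) (Fin.tail x) :=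
  Fin.prod_univ_succ _

lemma flip1_zero {r : ℕ} (x : Fin (r+1) → Bool) : flip1 x 0 = !(x 0) :=
  Function.update_self _ _ _

lemma tail_flip1 {r : ℕ} (x : Fin (r+1) → Bool) : Fin.tail (flip1 x) = Fin.tail x :=
  Fin.tail_update_zero _ _

lemma flip1_flip1 {r : ℕ} (x : Fin (r+1) → Bool) : flip1 (flip1 x) = x := by
  rw [flip1, flip1_zero, Bool.not_not, flip1, Function.update_idem, Function.update_eq_self]

theorem stmt2_general {r : ℕ} (p : Fin (r+1) → ℝ)
    (f f' : (Fin (r+1) → Bool) → ℝ)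
    (hf' : ∀ x, f' x =
      if x 0 then 2 * p 0 * f x + (1 - 2 * p 0) * f (flip1 x) else f x)
    (x : Fin (r+1) → Bool) :
    wt (Function.update p 0 (1/2)) (flip1 x) * f' (flip1 x)
        + wt (Function.update p 0 (1/2)) x * f' x
      = wt p (flip1 x) * f (flip1 x) + wt p x * f x := by
  -- All four weights share the factor `wt (Fin.tail p) (Fin.tail x)`; the rest is linear in `p 0`.
  simp only [wt_succ, tail_flip1, Fin.tail_update_zero, Function.update_self, flip1_zero,
    hf', flip1_flip1]
  cases x 0 <;> simp only [Bool.not_false, Bool.not_true, Bool.false_eq_true, ↓reduceIte] <;> ring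

/-- pointwise conservation of the signed measure under shifting:
μ'(x¹)f'(x¹) + μ'(x)f'(x) = μ(x¹)f(x¹) + μ(x)f(x), where μ' replaces p₁ by 1/2. -/
theorem stmt2 {r : ℕ} (p : Fin (r+1) → ℝ) (hp : ∀ i, 0 ≤ p i ∧ p i ≤ 1)
    (hp1 : p 0 ≤ 1 / 2)
    (f f' : (Fin (r+1) → Bool) → ℝ)
    (hf : ∀ x, f x ∈ Set.Icc (-1 : ℝ) 1)
    (hf' : ∀ x, f' x =
      if x 0 then 2 * p 0 * f x + (1 - 2 * p 0) * f (flip1 x) else f x)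
    (x : Fin (r+1) → Bool) :
    wt (Function.update p 0 (1/2)) (flip1 x) * f' (flip1 x)
        + wt (Function.update p 0 (1/2)) x * f' x
      = wt p (flip1 x) * f (flip1 x) + wt p x * f x :=
  stmt2_general p f f' hf' x
end
end

section
/- With the shifting construction f' and measures μ, μ' as above, for every x ∈ {-1,1}^r we have μ'(x^1)|f'(x^1)| + μ'(x)|f'(x)| ≤ μ(x^1)|f(x^1)| + μ(x)|f(x)|. Consequently E_{μ'}[|f'|] ≤ E_μ[|f|]. -/
open Finset

noncomputable section

/-- pointwise inequality for absolute values under shifting, and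
consequently E_{μ'}[|f'|] ≤ E_μ[|f|]. -/
theorem stmt3 {r : ℕ} (p : Fin (r+1) → ℝ) (hp : ∀ i, 0 ≤ p i ∧ p i ≤ 1)
    (hp1 : p 0 ≤ 1 / 2)
    (f f' : (Fin (r+1) → Bool) → ℝ)
    (hf : ∀ x, f x ∈ Set.Icc (-1 : ℝ) 1)
    (hf' : ∀ x, f' x =
      if x 0 then 2 * p 0 * f x + (1 - 2 * p 0) * f (flip1 x) else f x) :
    (∀ x : Fin (r+1) → Bool,
      wt (Function.update p 0 (1/2)) (flip1 x) * |f' (flip1 x)|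
          + wt (Function.update p 0 (1/2)) x * |f' x|
        ≤ wt p (flip1 x) * |f (flip1 x)| + wt p x * |f x|) ∧
    Ex (Function.update p 0 (1/2)) (fun x => |f' x|) ≤ Ex p (fun x => |f x|) := by

  classical
  have hflip0 : ∀ x : Fin (r+1) → Bool, flip1 x 0 = !(x 0) := by
    intro x; simp [flip1]
  have hflipflip : Function.Involutive (flip1 : (Fin (r+1) → Bool) → _) := by
    intro x; funext i
    by_cases h : i = 0 <;> simp [flip1, Function.update, h]
  have hwt : ∀ (q : Fin (r+1) → ℝ) (x : Fin (r+1) → Bool),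
      wt q x = (if x 0 then q 0 else 1 - q 0) *
        ∏ i ∈ Finset.univ.erase (0 : Fin (r+1)), (if x i then q i else 1 - q i) := by
    intro q x
    rw [wt, ← Finset.mul_prod_erase _ _ (Finset.mem_univ (0 : Fin (r+1)))]
  have key : ∀ x : Fin (r+1) → Bool,
      wt (Function.update p 0 (1/2)) (flip1 x) * |f' (flip1 x)|
          + wt (Function.update p 0 (1/2)) x * |f' x|
        ≤ wt p (flip1 x) * |f (flip1 x)| + wt p x * |f x| := by
    intro x
    set W : ℝ := ∏ i ∈ Finset.univ.erase (0 : Fin (r+1)),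
      (if x i then p i else 1 - p i) with hWdef
    have hWnn : 0 ≤ W := by
      apply Finset.prod_nonneg
      intro i _
      split_ifs
      · exact (hp i).1
      · linarith [(hp i).2]
    have hprod_flip : ∀ q : Fin (r+1) → ℝ,
        (∏ i ∈ Finset.univ.erase (0 : Fin (r+1)),
          (if flip1 x i then q i else 1 - q i)) =
        ∏ i ∈ Finset.univ.erase (0 : Fin (r+1)), (if x i then q i else 1 - q i) := by
      intro q
      apply Finset.prod_congr rfl
      intro i hi
      have : flip1 x i = x i := by
        simp [flip1, Function.update, Finset.ne_of_mem_erase hi]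
      rw [this]
    have hprod_p' : ∀ y : Fin (r+1) → Bool,
        (∏ i ∈ Finset.univ.erase (0 : Fin (r+1)),
          (if y i then Function.update p 0 (1/2) i else 1 - Function.update p 0 (1/2) i)) =
        ∏ i ∈ Finset.univ.erase (0 : Fin (r+1)), (if y i then p i else 1 - p i) := by
      intro y
      apply Finset.prod_congr rfl
      intro i hi
      rw [Function.update_of_ne (Finset.ne_of_mem_erase hi)]
    have hwtpx : wt p x = (if x 0 then p 0 else 1 - p 0) * W := hwt p x
    have hwtpfx : wt p (flip1 x) = (if x 0 then 1 - p 0 else p 0) * W := by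
      rw [hwt p (flip1 x), hprod_flip, hflip0]
      cases h : x 0 <;> simp [hWdef]
    have hwtp'x : wt (Function.update p 0 (1/2)) x = (1/2) * W := by
      rw [hwt _ x, hprod_p', Function.update_self]
      cases h : x 0 <;> norm_num [h, hWdef]
    have hwtp'fx : wt (Function.update p 0 (1/2)) (flip1 x) = (1/2) * W := by
      rw [hwt _ (flip1 x), hprod_p', hprod_flip, Function.update_self]
      cases h : x 0 <;> simp [hflip0, h, hWdef] <;> norm_num
    rw [hwtpx, hwtpfx, hwtp'x, hwtp'fx]
    have hp0 := hp 0
    cases h : x 0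
    · -- x 0 = false; flip1 x 0 = true
      have hfx : f' x = f x := by rw [hf' x, h]; simp
      have hffx : f' (flip1 x) =
          2 * p 0 * f (flip1 x) + (1 - 2 * p 0) * f x := by
        rw [hf' (flip1 x), hflip0, h, hflipflip x]; simp
      rw [hfx, hffx]
      norm_num
      have habs : |2 * p 0 * f (flip1 x) + (1 - 2 * p 0) * f x| ≤
          2 * p 0 * |f (flip1 x)| + (1 - 2 * p 0) * |f x| := by
        calc |2 * p 0 * f (flip1 x) + (1 - 2 * p 0) * f x|
            ≤ |2 * p 0 * f (flip1 x)| + |(1 - 2 * p 0) * f x| := abs_add_le _ _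
          _ = 2 * p 0 * |f (flip1 x)| + (1 - 2 * p 0) * |f x| := by
              rw [abs_mul (2 * p 0), abs_mul (1 - 2 * p 0),
                abs_of_nonneg (by linarith : (0:ℝ) ≤ 2 * p 0),
                abs_of_nonneg (by linarith : (0:ℝ) ≤ 1 - 2 * p 0)]
      nlinarith [mul_le_mul_of_nonneg_left habs hWnn, abs_nonneg (f x),
        abs_nonneg (f (flip1 x)), mul_nonneg hWnn (abs_nonneg (f x)),
        mul_nonneg hWnn (abs_nonneg (f (flip1 x)))]
    · -- x 0 = true
      have hfx : f' x = 2 * p 0 * f x + (1 - 2 * p 0) * f (flip1 x) := by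
        rw [hf' x, h]; simp
      have hffx : f' (flip1 x) = f (flip1 x) := by
        rw [hf' (flip1 x), hflip0, h]; simp
      rw [hfx, hffx]
      norm_num
      have habs : |2 * p 0 * f x + (1 - 2 * p 0) * f (flip1 x)| ≤
          2 * p 0 * |f x| + (1 - 2 * p 0) * |f (flip1 x)| := by
        calc |2 * p 0 * f x + (1 - 2 * p 0) * f (flip1 x)|
            ≤ |2 * p 0 * f x| + |(1 - 2 * p 0) * f (flip1 x)| := abs_add_le _ _
          _ = 2 * p 0 * |f x| + (1 - 2 * p 0) * |f (flip1 x)| := by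
              rw [abs_mul (2 * p 0), abs_mul (1 - 2 * p 0),
                abs_of_nonneg (by linarith : (0:ℝ) ≤ 2 * p 0),
                abs_of_nonneg (by linarith : (0:ℝ) ≤ 1 - 2 * p 0)]
      nlinarith [mul_le_mul_of_nonneg_left habs hWnn, abs_nonneg (f x),
        abs_nonneg (f (flip1 x)), mul_nonneg hWnn (abs_nonneg (f x)),
        mul_nonneg hWnn (abs_nonneg (f (flip1 x)))]
  refine ⟨key, ?_⟩
  have hbij : Function.Bijective (flip1 : (Fin (r+1) → Bool) → _) :=
    hflipflip.bijective
  have e1 : ∀ (q : Fin (r+1) → ℝ) (g : (Fin (r+1) → Bool) → ℝ),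
      (∑ x : Fin (r+1) → Bool, wt q (flip1 x) * g (flip1 x)) = Ex q g := by
    intro q g
    exact Fintype.sum_bijective flip1 hbij _ _ (fun x => rfl)
  have hsum := Finset.sum_le_sum (fun x (_ : x ∈ Finset.univ) => key x)
  rw [Finset.sum_add_distrib, Finset.sum_add_distrib] at hsum
  have l1 := e1 (Function.update p 0 (1/2)) (fun x => |f' x|)
  have l2 := e1 p (fun x => |f x|)
  have hEx1 : Ex (Function.update p 0 (1/2)) (fun x => |f' x|) =
      ∑ x : Fin (r+1) → Bool, wt (Function.update p 0 (1/2)) x * |f' x| := rfl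
  have hEx2 : Ex p (fun x => |f x|) = ∑ x : Fin (r+1) → Bool, wt p x * |f x| := rfl
  rw [l1, l2, hEx1, hEx2] at hsum
  rw [hEx1, hEx2]
  linarith
end
end

section
/- With the shifting construction f', measures μ, μ' as above, and any coordinate i ≠ 1: E_{μ'}[f' | x_i = 1] = E_μ[f | x_i = 1] and E_{μ'}[f' | x_i = -1] = E_μ[f | x_i = -1]. Moreover E_{μ'}[f' | x_1 = -1] = E_μ[f | x_1 = -1]. -/
/-!
Integrate out the first coordinate. Given the remaining coordinates `y`, the shifted function
puts mass `1/2 · (2p₁ f(1,y) + (1-2p₁) f(-1,y)) + 1/2 · f(-1,y) = p₁ f(1,y) + (1-p₁) f(-1,y)`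
on the fibre over `y` under `μ'`, exactly the mass `f` puts on it under `μ`; hence `E_{μ'} f' = E_μ f`.
Conditioning on a coordinate `i ≠ 1` commutes with the shift, since flipping `x₁` does not change
`x_i`; conditioning on `x₁ = -1` sees only the fibre where `f' = f`, and the weight of that fibre
cancels against the denominator.
-/

open Finset

noncomputable section

/-- The shifting `f ↦ f'` in the first coordinate, with parameter `c = p₁`. -/
def shift {n : ℕ} (c : ℝ) (g : (Fin (n + 1) → Bool) → ℝ) (x : Fin (n + 1) → Bool) : ℝ :=
  if x 0 then 2 * c * g x + (1 - 2 * c) * g (flip1 x) else g x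

lemma sum_cube_succ {M : Type*} [AddCommMonoid M] {n : ℕ} (F : (Fin (n + 1) → Bool) → M) :
    ∑ x, F x = ∑ y : Fin n → Bool, (F (Fin.cons true y) + F (Fin.cons false y)) := by
  rw [← (Fin.consEquiv fun _ => Bool).sum_comp, Fintype.sum_prod_type, Fintype.sum_bool,
    ← Finset.sum_add_distrib]
  rfl

lemma wt_cons {n : ℕ} (p : Fin (n + 1) → ℝ) (b : Bool) (y : Fin n → Bool) :
    wt p (Fin.cons b y) = (if b then p 0 else 1 - p 0) * wt (Fin.tail p) y := by
  simp only [wt, Fin.prod_univ_succ, Fin.cons_zero, Fin.cons_succ, Fin.tail]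

lemma flip1_cons {n : ℕ} (b : Bool) (y : Fin n → Bool) :
    flip1 (Fin.cons b y) = Fin.cons (!b) y := by
  rw [flip1, Fin.cons_zero, Fin.update_cons_zero]

lemma Ex_update_half_shift {n : ℕ} (p : Fin (n + 1) → ℝ) (g : (Fin (n + 1) → Bool) → ℝ) :
    Ex (Function.update p 0 (1 / 2)) (shift (p 0) g) = Ex p g := by
  simp only [Ex, sum_cube_succ (fun x => _ * _), wt_cons, Fin.tail_update_zero,
    Function.update_self, shift, flip1_cons, Fin.cons_zero]
  refine Finset.sum_congr rfl fun y _ => ?_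
  simp only [if_true, if_false, Bool.not_true, Bool.false_eq_true]
  ring

lemma shift_indicator {n : ℕ} (c : ℝ) (g : (Fin (n + 1) → Bool) → ℝ) {i : Fin (n + 1)}
    (hi : i ≠ 0) (b : Bool) :
    shift c (fun x => if x i = b then g x else 0) = fun x => if x i = b then shift c g x else 0 := by
  funext x
  have hflip : flip1 x i = x i := Function.update_of_ne hi _ _
  by_cases hx : x i = b <;> simp [shift, hflip, hx]

lemma condEx_eq_Ex_div {n : ℕ} (p : Fin n → ℝ) (g : (Fin n → Bool) → ℝ) (i : Fin n) (b : Bool) :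
    condEx p g i b = Ex p (fun x => if x i = b then g x else 0) / (if b then p i else 1 - p i) := by
  simp only [condEx, Ex, mul_ite, mul_zero]

lemma condEx_zero_false {n : ℕ} (p : Fin (n + 1) → ℝ) (hp : p 0 ≠ 1)
    (g : (Fin (n + 1) → Bool) → ℝ) :
    condEx p g 0 false = ∑ y, wt (Fin.tail p) y * g (Fin.cons false y) := by
  have hp' : 1 - p 0 ≠ 0 := sub_ne_zero.mpr hp.symm
  simp only [condEx, sum_cube_succ (fun x => ite _ _ _), Fin.cons_zero, wt_cons]
  simp only [Bool.true_eq_false, Bool.false_eq_true, if_false, if_true, zero_add, Finset.sum_div]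
  refine Finset.sum_congr rfl fun y _ => ?_
  rw [mul_assoc, mul_div_cancel_left₀ _ hp']

theorem stmt4_general {r : ℕ} (p : Fin (r+1) → ℝ)
    (hp1 : p 0 ≤ 1 / 2)
    (f f' : (Fin (r+1) → Bool) → ℝ)
    (hf' : ∀ x, f' x =
      if x 0 then 2 * p 0 * f x + (1 - 2 * p 0) * f (flip1 x) else f x) :
    (∀ i : Fin (r+1), i ≠ 0 →
      condEx (Function.update p 0 (1/2)) f' i true = condEx p f i true ∧
      condEx (Function.update p 0 (1/2)) f' i false = condEx p f i false) ∧
    condEx (Function.update p 0 (1/2)) f' 0 false = condEx p f 0 false := by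
  obtain rfl : f' = shift (p 0) f := funext hf'
  have hcoord (i : Fin (r + 1)) (hi : i ≠ 0) (b : Bool) :
      condEx (Function.update p 0 (1/2)) (shift (p 0) f) i b = condEx p f i b := by
    rw [condEx_eq_Ex_div, condEx_eq_Ex_div, ← shift_indicator _ _ hi, Ex_update_half_shift,
      Function.update_of_ne hi]
  refine ⟨fun i hi => ⟨hcoord i hi true, hcoord i hi false⟩, ?_⟩
  rw [condEx_zero_false _ (by norm_num), condEx_zero_false _ (by linarith),
    Fin.tail_update_zero]
  simp only [shift, Fin.cons_zero, Bool.false_eq_true, if_false]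

/-- shifting preserves the conditional expectations at coordinates
i ≠ 1 (both values) and at the first coordinate given x₁ = -1. -/
theorem stmt4 {r : ℕ} (p : Fin (r+1) → ℝ) (hp : ∀ i, 0 ≤ p i ∧ p i ≤ 1)
    (hp1 : p 0 ≤ 1 / 2)
    (f f' : (Fin (r+1) → Bool) → ℝ)
    (hf : ∀ x, f x ∈ Set.Icc (-1 : ℝ) 1)
    (hf' : ∀ x, f' x =
      if x 0 then 2 * p 0 * f x + (1 - 2 * p 0) * f (flip1 x) else f x) :
    (∀ i : Fin (r+1), i ≠ 0 →
      condEx (Function.update p 0 (1/2)) f' i true = condEx p f i true ∧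
      condEx (Function.update p 0 (1/2)) f' i false = condEx p f i false) ∧
    condEx (Function.update p 0 (1/2)) f' 0 false = condEx p f 0 false :=
  stmt4_general p hp1 f f' hf'
end
end

section
/- For every f : {-1,1}^r → [-1,1] with λ := E_μ[|f|] (μ uniform), there exists a semi-threshold function g with E_μ[|g|] ≤ λ such that E_μ[f(x)·Σ_i x_i] ≤ E_μ[g(x)·Σ_i x_i]. That is, the maximum of E_μ[f·Σ_i x_i] subject to E_μ[|f|] ≤ λ is attained at a semi-threshold function. -/
open Finset

noncomputable section

/-- A semi-threshold function with parameters `k ≥ 0` and `β ∈ [0,1]`. -/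
def IsSemiThreshold {r : ℕ} (g : (Fin r → Bool) → ℝ) : Prop :=
  ∃ (k : ℕ) (β : ℝ), 0 ≤ β ∧ β ≤ 1 ∧ ∀ x,
    g x = if (k : ℝ) < S x then 1
      else if S x = (k : ℝ) then β
      else if S x = -(k : ℝ) then -β
      else if S x < -(k : ℝ) then -1
      else 0

/-!
A discrete bathtub principle. With `u := |f| ∈ [0,1]`, choose `k ∈ ℕ` and `β ∈ [0,1]` so that
`G := 1{|S| > k} + β·1{|S| = k}` has `E[G] = E[u]`: the mass of `{|S| ≥ k}` runs from `1` down
to `0` as `k` grows, so some `k` brackets `E[u]` and `β` interpolates. Pointwise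
`(G - u)(|S| - k) ≥ 0`, hence `E[f·S] ≤ E[u·|S|] ≤ E[G·|S|]`. Finally `g := sign(S)·G` is a
semi-threshold function with `|g| = G` and `g·S = G·|S|`.
-/
def semiStep (k : ℕ) (β : ℝ) (n : ℕ) : ℝ :=
  if k < n then 1 else if n = k then β else 0

lemma semiStep_zero_one (n : ℕ) : semiStep 0 1 n = 1 := by
  unfold semiStep; split_ifs <;> first | rfl | omega

lemma semiStep_of_lt {k n : ℕ} (β : ℝ) (h : n < k) : semiStep k β n = 0 := by
  unfold semiStep; split_ifs <;> first | rfl | omega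

lemma semiStep_eq_succ_add (k : ℕ) (β : ℝ) (n : ℕ) :
    semiStep k β n = semiStep (k + 1) 1 n + β * if n = k then 1 else 0 := by
  unfold semiStep; split_ifs <;> first | omega | simp

lemma semiStep_nonneg {β : ℝ} (hβ : 0 ≤ β) (k n : ℕ) : 0 ≤ semiStep k β n := by
  unfold semiStep; split_ifs <;> first | exact hβ | norm_num

lemma semiStep_sub_mul_nonneg (k : ℕ) (β : ℝ) (n : ℕ) {t : ℝ} (ht : t ∈ Set.Icc (0 : ℝ) 1) :
    0 ≤ (semiStep k β n - t) * ((n : ℝ) - k) := by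
  obtain ⟨ht0, ht1⟩ := ht
  rcases lt_trichotomy k n with hkn | rfl | hnk
  · have : (k : ℝ) < n := by exact_mod_cast hkn
    simp only [semiStep, if_pos hkn]
    exact mul_nonneg (by linarith) (by linarith)
  · simp
  · have : (n : ℝ) < k := by exact_mod_cast hnk
    rw [semiStep_of_lt β hnk]
    exact mul_nonneg_of_nonpos_of_nonpos (by linarith) (by linarith)

lemma exists_succ_le_le {a : ℕ → ℝ} {c : ℝ} (h0 : c ≤ a 0) :
    ∀ N, a (N + 1) ≤ c → ∃ k, a (k + 1) ≤ c ∧ c ≤ a k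
  | 0, hN => ⟨0, hN, h0⟩
  | N + 1, hN => by
    by_cases hc : c ≤ a (N + 1)
    · exact ⟨N + 1, hN, hc⟩
    · exact exists_succ_le_le h0 N (le_of_not_ge hc)

section Bathtub

variable {α : Type*} [Fintype α] {w : α → ℝ}

lemma exists_semiStep_sum_eq (h : α → ℕ) {c : ℝ} (hc0 : 0 ≤ c)
    (hc1 : c ≤ ∑ x, w x) :
    ∃ k β, β ∈ Set.Icc (0 : ℝ) 1 ∧ ∑ x, w x * semiStep k β (h x) = c := by
  -- `a k` is the `w`-mass of `{x | k ≤ h x}`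
  set a : ℕ → ℝ := fun k => ∑ x, w x * semiStep k 1 (h x)
  have ha0 : c ≤ a 0 := by simpa [a, semiStep_zero_one] using hc1
  have haN : a (univ.sup h + 1) ≤ c := by
    simpa [a, semiStep_of_lt _ (Nat.lt_succ_of_le (le_sup (mem_univ _)))] using hc0
  obtain ⟨k, hk1, hk⟩ := exists_succ_le_le ha0 _ haN
  set b := ∑ x, w x * if h x = k then 1 else 0
  have hsum (β : ℝ) : ∑ x, w x * semiStep k β (h x) = a (k + 1) + β * b := by
    simp only [a, b, semiStep_eq_succ_add k β, mul_add, sum_add_distrib, mul_sum]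
    congr 1; exact sum_congr rfl fun x _ => by ring
  have hcont : ContinuousOn (fun β => a (k + 1) + β * b) (Set.Icc 0 1) := by fun_prop
  obtain ⟨β, hβ, hβc⟩ := intermediate_value_Icc zero_le_one hcont
    ⟨by simpa using hk1, hk.trans_eq (hsum 1)⟩
  exact ⟨k, β, hβ, (hsum β).trans hβc⟩

lemma sum_mul_le_sum_semiStep_mul (hw : ∀ x, 0 ≤ w x) (h : α → ℕ) {u : α → ℝ}
    (hu : ∀ x, u x ∈ Set.Icc (0 : ℝ) 1) (k : ℕ) (β : ℝ)
    (hmass : ∑ x, w x * semiStep k β (h x) = ∑ x, w x * u x) :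
    ∑ x, w x * (u x * h x) ≤ ∑ x, w x * (semiStep k β (h x) * h x) := by
  have key : 0 ≤ ∑ x, w x * ((semiStep k β (h x) - u x) * ((h x : ℝ) - k)) :=
    sum_nonneg fun x _ => mul_nonneg (hw x) (semiStep_sub_mul_nonneg k β (h x) (hu x))
  have expand : ∑ x, w x * ((semiStep k β (h x) - u x) * ((h x : ℝ) - k)) =
      ∑ x, w x * (semiStep k β (h x) * h x) - ∑ x, w x * (u x * h x) -
        k * (∑ x, w x * semiStep k β (h x) - ∑ x, w x * u x) := by
    simp only [mul_sub, ← sum_sub_distrib, mul_sum]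
    exact sum_congr rfl fun x _ => by ring
  rw [expand, hmass, sub_self, mul_zero, sub_zero] at key
  linarith

end Bathtub

lemma wt_nonneg {r : ℕ} {p : Fin r → ℝ} (hp : ∀ i, p i ∈ Set.Icc (0 : ℝ) 1) (x : Fin r → Bool) :
    0 ≤ wt p x :=
  prod_nonneg fun i _ => by
    split_ifs
    · exact (hp i).1
    · exact sub_nonneg.2 (hp i).2

def natAbsS {r : ℕ} (x : Fin r → Bool) : ℕ :=
  (∑ i, if x i then (1 : ℤ) else -1).natAbs

lemma natAbsS_cast {r : ℕ} (x : Fin r → Bool) : (natAbsS x : ℝ) = |S x| := by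
  simp only [natAbsS, Nat.cast_natAbs, Int.cast_abs, S, sgn]
  push_cast [apply_ite (Int.cast : ℤ → ℝ)]
  rfl

def signedStep {r : ℕ} (k : ℕ) (β : ℝ) (x : Fin r → Bool) : ℝ :=
  if 0 ≤ S x then semiStep k β (natAbsS x) else -semiStep k β (natAbsS x)

lemma abs_signedStep {r : ℕ} (k : ℕ) {β : ℝ} (hβ : 0 ≤ β) (x : Fin r → Bool) :
    |signedStep k β x| = semiStep k β (natAbsS x) := by
  unfold signedStep
  split_ifs <;> simp only [abs_neg, abs_of_nonneg (semiStep_nonneg hβ k _)]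

lemma signedStep_mul_S {r : ℕ} (k : ℕ) (β : ℝ) (x : Fin r → Bool) :
    signedStep k β x * S x = semiStep k β (natAbsS x) * natAbsS x := by
  rw [natAbsS_cast, signedStep]
  split_ifs with hS
  · rw [abs_of_nonneg hS]
  · rw [abs_of_neg (not_le.1 hS)]; ring

lemma isSemiThreshold_signedStep {r : ℕ} (k : ℕ) {β : ℝ} (hβ : β ∈ Set.Icc (0 : ℝ) 1) :
    IsSemiThreshold (signedStep k β : (Fin r → Bool) → ℝ) := by
  refine ⟨k, β, hβ.1, hβ.2, fun x => ?_⟩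
  have hk : (k < natAbsS x ↔ (k : ℝ) < |S x|) := by rw [← natAbsS_cast]; exact Nat.cast_lt.symm
  have hk' : (natAbsS x = k ↔ |S x| = k) := by rw [← natAbsS_cast]; exact Nat.cast_inj.symm
  have k0 : (0 : ℝ) ≤ k := k.cast_nonneg
  simp only [signedStep, semiStep, hk, hk']
  rcases le_or_gt 0 (S x) with hS | hS
  · rw [abs_of_nonneg hS]
    split_ifs <;> grind
  · rw [abs_of_neg hS]
    split_ifs <;> grind

/-- the maximum of E[f·Σᵢxᵢ] subject to E[|f|] ≤ λ is attained at a
semi-threshold function. -/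
theorem stmt7 {r : ℕ} (f : (Fin r → Bool) → ℝ)
    (hf : ∀ x, f x ∈ Set.Icc (-1 : ℝ) 1) :
    ∃ g : (Fin r → Bool) → ℝ, IsSemiThreshold g ∧
      Ex (half r) (fun x => |g x|) ≤ Ex (half r) (fun x => |f x|) ∧
      Ex (half r) (fun x => f x * S x) ≤ Ex (half r) (fun x => g x * S x) := by
  have hw : ∀ x, 0 ≤ wt (half r) x := wt_nonneg fun _ => by norm_num [half]
  have habs : ∀ x, |f x| ∈ Set.Icc (0 : ℝ) 1 := fun x => ⟨abs_nonneg _, abs_le.2 (hf x)⟩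
  obtain ⟨k, β, hβ, hmass⟩ := exists_semiStep_sum_eq natAbsS (c := Ex (half r) (|f ·|))
    (sum_nonneg fun x _ => mul_nonneg (hw x) (habs x).1)
    (sum_le_sum fun x _ => mul_le_of_le_one_right (hw x) (habs x).2)
  refine ⟨signedStep k β, isSemiThreshold_signedStep k hβ, ?_, ?_⟩
  · simp only [Ex, abs_signedStep k hβ.1, hmass, le_refl]
  · calc Ex (half r) (fun x => f x * S x)
        ≤ Ex (half r) (fun x => |f x| * natAbsS x) :=
          sum_le_sum fun x _ => mul_le_mul_of_nonneg_left
            ((le_abs_self _).trans_eq (by rw [abs_mul, ← natAbsS_cast])) (hw x)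
      _ ≤ Ex (half r) (fun x => semiStep k β (natAbsS x) * natAbsS x) :=
          sum_mul_le_sum_semiStep_mul hw natAbsS habs k β hmass
      _ = Ex (half r) (fun x => signedStep k β x * S x) := by
          simp only [Ex, signedStep_mul_S]
end
end

section
/- If g is a semi-threshold function with parameters k and β on {-1,1}^r, μ is the uniform measure, and k ≡ r (mod 2), then (1/r)·E_μ[g·Σ_{i=1}^r x_i] = [2(1-β)·C(r-1, (k+r)/2) + 2β·C(r-1, (k+r-2)/2)]/2^r. -/
open Finset

noncomputable section

def cnt {r : ℕ} (x : Fin r → Bool) : ℕ := (univ.filter fun i => x i).card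

lemma Ex_half {r : ℕ} (f : (Fin r → Bool) → ℝ) :
    Ex (half r) f = (∑ x : Fin r → Bool, f x) / 2 ^ r := by
  unfold Ex wt half
  rw [Finset.sum_div]
  refine Finset.sum_congr rfl fun x _ => ?_
  have h : (∏ i : Fin r, if x i then (1:ℝ)/2 else 1 - 1/2) = (1/2:ℝ)^r := by
    have : ∀ i : Fin r, (if x i then (1:ℝ)/2 else 1 - 1/2) = 1/2 := by
      intro i; split <;> norm_num
    simp only [this, Finset.prod_const, Finset.card_univ, Fintype.card_fin]
  rw [h]
  rw [div_pow, one_pow, div_mul_eq_mul_div, one_mul]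

lemma S_eq {r : ℕ} (x : Fin r → Bool) : S x = 2 * (cnt x : ℝ) - r := by
  unfold S cnt sgn
  have h : ∀ i : Fin r, (if x i then (1:ℝ) else -1)
      = 2 * (if x i then (1:ℝ) else 0) - 1 := by intro i; split <;> norm_num
  simp only [h]
  rw [Finset.sum_sub_distrib, ← Finset.mul_sum, Finset.sum_boole, Finset.sum_const]
  simp

lemma card_cnt (r j : ℕ) :
    ((univ : Finset (Fin r → Bool)).filter fun x => cnt x = j).card = r.choose j := by
  have := Finset.card_nbij' (s := (univ : Finset (Fin r → Bool)).filter fun x => cnt x = j)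
    (t := Finset.powersetCard j (univ : Finset (Fin r)))
    (fun x => univ.filter fun i => x i)
    (fun s => fun i => decide (i ∈ s))
    (by intro x hx
        simp only [Finset.mem_coe, Finset.mem_filter, Finset.mem_univ, true_and] at hx
        simpa [Finset.mem_powersetCard_univ, cnt] using hx)
    (by intro s hs
        simp only [Finset.mem_coe, Finset.mem_powersetCard_univ] at hs
        simp only [Finset.mem_coe, Finset.mem_filter, Finset.mem_univ, true_and]
        unfold cnt
        rw [← hs]
        congr 1
        ext i
        simp)
    (by intro x _; funext i; simp)
    (by intro s _; ext i; simp)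
  rw [this, Finset.card_powersetCard, Finset.card_univ, Fintype.card_fin]

lemma sum_cnt {r : ℕ} (F : ℕ → ℝ) :
    ∑ x : Fin r → Bool, F (cnt x) = ∑ j ∈ Finset.range (r + 1), (r.choose j : ℝ) * F j := by
  rw [← Finset.sum_fiberwise_of_maps_to (g := fun x : Fin r → Bool => cnt x)
      (t := Finset.range (r + 1))
      (by intro x _
          simp only [Finset.mem_range, Nat.lt_succ_iff, cnt]
          exact le_trans (Finset.card_filter_le _ _) (by simp))
      (fun x => F (cnt x))]
  refine Finset.sum_congr rfl fun j _ => ?_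
  have h1 : ∑ x ∈ (univ : Finset (Fin r → Bool)).filter (fun x => cnt x = j), F (cnt x)
      = ∑ _x ∈ (univ : Finset (Fin r → Bool)).filter (fun x => cnt x = j), F j := by
    refine Finset.sum_congr rfl fun x hx => ?_
    simp only [Finset.mem_filter] at hx
    rw [hx.2]
  rw [h1, Finset.sum_const, card_cnt, nsmul_eq_mul]

def realG (r k : ℕ) (β : ℝ) (j : ℕ) : ℝ :=
  if (k : ℝ) < 2 * (j : ℝ) - (r : ℝ) then 1
  else if 2 * (j : ℝ) - (r : ℝ) = (k : ℝ) then β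
  else if 2 * (j : ℝ) - (r : ℝ) = -(k : ℝ) then -β
  else if 2 * (j : ℝ) - (r : ℝ) < -(k : ℝ) then -1
  else 0

/-- telescoping identity -/
lemma tkey (r : ℕ) (hr : 1 ≤ r) (m : ℕ) :
    (2 * ((m+1 : ℕ) : ℝ) - r) * (r.choose (m+1) : ℝ)
      = (r : ℝ) * ((r-1).choose m : ℝ) - (r : ℝ) * ((r-1).choose (m+1) : ℝ) := by
  obtain ⟨s, rfl⟩ : ∃ s, r = s + 1 := ⟨r - 1, by omega⟩
  have h1 : ((s+1).choose (m+1) : ℝ) = (s.choose m : ℝ) + (s.choose (m+1) : ℝ) := by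
    rw [Nat.choose_succ_succ]; push_cast; ring
  have h2 : ((s:ℝ)+1) * (s.choose m : ℝ) = ((s+1).choose (m+1) : ℝ) * ((m:ℝ)+1) := by
    exact_mod_cast congrArg (Nat.cast (R := ℝ)) (Nat.add_one_mul_choose_eq s m)
  simp only [Nat.add_sub_cancel]
  push_cast
  linear_combination (-((s:ℝ)+1)) * h1 - 2 * h2

lemma core (r k : ℕ) (hr : 1 ≤ r) (hk : k ≤ r) (β : ℝ) (J J' : ℕ)
    (hJ : k + r = 2 * J) (hJ' : r = 2 * J' + k) :
    ∑ j ∈ Finset.range (r + 1), (r.choose j : ℝ) * (realG r k β j * (2 * (j:ℝ) - r))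
      = r * (2 * (1 - β) * ((r-1).choose J : ℝ) + 2 * β * ((r-1).choose (J-1) : ℝ)) := by
  set t : ℕ → ℝ := fun j => (2 * (j:ℝ) - r) * (r.choose j : ℝ) with ht
  set d : ℕ → ℝ := fun j => (r : ℝ) * ((r-1).choose j : ℝ) with hd
  have tde : ∀ m : ℕ, t (m+1) = d m - d (m+1) := fun m => by
    simpa [ht, hd] using tkey r hr m
  have c1 : ∀ j : ℕ, ((k : ℝ) < 2 * (j:ℝ) - r) ↔ J < j := by
    intro j
    constructor
    · intro h
      have h2 : (k:ℝ) + r < 2 * j := by linarith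
      have h3 : k + r < 2 * j := by exact_mod_cast h2
      omega
    · intro h
      have h3 : k + r < 2 * j := by omega
      have h2 : (k:ℝ) + r < 2 * j := by exact_mod_cast h3
      linarith
  have c2 : ∀ j : ℕ, (2 * (j:ℝ) - r = (k : ℝ)) ↔ j = J := by
    intro j
    constructor
    · intro h
      have h2 : 2 * (j:ℝ) = (k:ℝ) + r := by linarith
      have h3 : 2 * j = k + r := by exact_mod_cast h2
      omega
    · intro h
      have h3 : 2 * j = k + r := by omega
      have h2 : 2 * (j:ℝ) = (k:ℝ) + r := by exact_mod_cast h3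
      linarith
  have c3 : ∀ j : ℕ, (2 * (j:ℝ) - r = -(k : ℝ)) ↔ j = J' := by
    intro j
    constructor
    · intro h
      have h2 : 2 * (j:ℝ) + k = (r:ℝ) := by linarith
      have h3 : 2 * j + k = r := by exact_mod_cast h2
      omega
    · intro h
      have h3 : 2 * j + k = r := by omega
      have h2 : 2 * (j:ℝ) + k = (r:ℝ) := by exact_mod_cast h3
      linarith
  have c4 : ∀ j : ℕ, (2 * (j:ℝ) - r < -(k : ℝ)) ↔ j < J' := by
    intro j
    constructor
    · intro h
      have h2 : 2 * (j:ℝ) + k < (r:ℝ) := by linarith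
      have h3 : 2 * j + k < r := by exact_mod_cast h2
      omega
    · intro h
      have h3 : 2 * j + k < r := by omega
      have h2 : 2 * (j:ℝ) + k < (r:ℝ) := by exact_mod_cast h3
      linarith
  have hJr : J ≤ r := by omega
  have hJ1 : 1 ≤ J := by omega
  have hJ'J : J' ≤ J := by omega
  -- pointwise rewriting to indicator form
  have key : ∀ j ∈ Finset.range (r+1),
      (r.choose j : ℝ) * (realG r k β j * (2 * (j:ℝ) - r))
        = (if J < j then t j else 0) + β * (if j = J then t j else 0)
          - β * (if j = J' then t j else 0) - (if j < J' then t j else 0) := by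
    intro j _
    simp only [realG, c1 j, c2 j, c3 j, c4 j, ht]
    split_ifs <;> try ring1
    all_goals try (exfalso; omega)
    all_goals
      have hz : 2 * (j:ℝ) - (r:ℝ) = 0 := by
        have hk0 : k = 0 := by omega
        have h2j : 2 * j = k + r := by omega
        have hc : 2 * (j:ℝ) = ((k + r : ℕ) : ℝ) := by exact_mod_cast h2j
        have hc2 : (k:ℝ) = 0 := by exact_mod_cast hk0
        push_cast at hc
        linarith
    all_goals linear_combination ((r.choose j : ℝ) * β) * hz
  rw [Finset.sum_congr rfl key]
  rw [Finset.sum_sub_distrib, Finset.sum_sub_distrib, Finset.sum_add_distrib,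
      ← Finset.mul_sum, ← Finset.mul_sum]
  have S2 : ∑ j ∈ Finset.range (r+1), (if j = J then t j else 0) = t J := by
    rw [Finset.sum_ite_eq' (Finset.range (r+1)) J t, if_pos (by simp [Finset.mem_range]; omega)]
  have S3 : ∑ j ∈ Finset.range (r+1), (if j = J' then t j else 0) = t J' := by
    rw [Finset.sum_ite_eq' (Finset.range (r+1)) J' t, if_pos (by simp [Finset.mem_range]; omega)]
  have hdr : d r = 0 := by
    simp [hd, Nat.choose_eq_zero_of_lt (show r - 1 < r by omega)]
  have S1 : ∑ j ∈ Finset.range (r+1), (if J < j then t j else 0) = d J := by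
    rw [← Finset.sum_filter]
    have hfil : (Finset.range (r+1)).filter (fun j => J < j) = Finset.Ico (J+1) (r+1) := by
      ext a; simp [Finset.mem_Ico, Finset.mem_range, Finset.mem_filter]; omega
    rw [hfil, Finset.sum_Ico_eq_sum_range]
    have : ∀ i ∈ Finset.range (r + 1 - (J + 1)), t (J + 1 + i) = d (J + i) - d (J + (i + 1)) := by
      intro i _
      rw [show J + 1 + i = (J + i) + 1 from by omega]
      exact tde (J + i)
    rw [Finset.sum_congr rfl this, Finset.sum_range_sub' (fun i => d (J + i))]
    rw [show J + 0 = J from rfl, show J + (r + 1 - (J+1)) = r from by omega, hdr, sub_zero]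
  have S4 : ∑ j ∈ Finset.range (r+1), (if j < J' then t j else 0)
      = ∑ j ∈ Finset.range J', t j := by
    rw [← Finset.sum_filter]
    congr 1
    ext a; simp [Finset.mem_range, Finset.mem_filter]; omega
  rw [S1, S2, S3, S4]
  have htJ : t J = d (J-1) - d J := by
    rw [show J = J - 1 + 1 from by omega]
    exact tde (J-1)
  have hkJ : (2 * (J:ℝ) - r) = (k:ℝ) := by
    have : 2 * J = k + r := by omega
    have : 2 * (J:ℝ) = (k:ℝ) + r := by exact_mod_cast this
    linarith
  have hkJ' : (2 * (J':ℝ) - r) = -(k:ℝ) := by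
    have : 2 * J' + k = r := by omega
    have : 2 * (J':ℝ) + k = (r:ℝ) := by exact_mod_cast this
    linarith
  have hsymm : (r.choose J' : ℝ) = (r.choose J : ℝ) := by
    rw [show J' = r - J from by omega, Nat.choose_symm hJr]
  have htJ' : t J' = -(t J) := by
    simp only [ht, hkJ, hkJ', hsymm]; ring
  rcases Nat.eq_zero_or_pos J' with h0 | hpos
  · -- k = r, J = r
    subst h0
    rw [Finset.sum_range_zero, htJ', htJ, show J = r from by omega, hdr]
    simp only [hd]
    rw [Nat.choose_eq_zero_of_lt (show r - 1 < r by omega), Nat.choose_self]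
    push_cast
    ring
  · obtain ⟨m, rfl⟩ : ∃ m, J' = m + 1 := ⟨J' - 1, by omega⟩
    have hS4v : ∑ j ∈ Finset.range (m+1), t j = -(d m) := by
      rw [Finset.sum_range_succ']
      have : ∀ i ∈ Finset.range m, t (i+1) = d i - d (i+1) := fun i _ => tde i
      rw [Finset.sum_congr rfl this, Finset.sum_range_sub' d]
      have ht0 : t 0 = -(d 0) := by simp [ht, hd]
      rw [ht0]; ring
    rw [hS4v, htJ', htJ]
    have hdm : d m = d J := by
      simp only [hd]
      congr 1
      rw [show m = (r-1) - J from by omega, Nat.choose_symm (show J ≤ r - 1 by omega)]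
    rw [hdm]
    simp only [hd]
    ring

/-- for a semi-threshold function g with parameters k, β (with
k ≡ r mod 2), (1/r)·E_μ[g·Σᵢxᵢ] = [2(1-β)C(r-1,(k+r)/2) + 2βC(r-1,(k+r-2)/2)]/2^r. -/
theorem stmt8 {r : ℕ} (hr : 1 ≤ r) (k : ℕ) (β : ℝ) (hβ0 : 0 ≤ β) (hβ1 : β ≤ 1)
    (hpar : k % 2 = r % 2)
    (g : (Fin r → Bool) → ℝ)
    (hg : ∀ x, g x = if (k : ℝ) < S x then 1
      else if S x = (k : ℝ) then β
      else if S x = -(k : ℝ) then -β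
      else if S x < -(k : ℝ) then -1
      else 0) :
    (1 / r : ℝ) * Ex (half r) (fun x => g x * S x)
      = (2 * (1 - β) * ((r - 1).choose ((k + r) / 2))
          + 2 * β * ((r - 1).choose ((k + r - 2) / 2))) / 2 ^ r := by
  have hr0 : (r : ℝ) ≠ 0 := Nat.cast_ne_zero.mpr (by omega)
  rw [Ex_half (fun x => g x * S x)]
  rcases le_or_gt k r with hk | hk
  · -- main case k ≤ r
    have hfix : ∀ x : Fin r → Bool,
        g x * S x = realG r k β (cnt x) * (2 * ((cnt x : ℕ) : ℝ) - r) := by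
      intro x
      rw [hg x, S_eq x]
      rfl
    have hsum : (∑ x : Fin r → Bool, g x * S x)
        = ∑ j ∈ Finset.range (r+1), (r.choose j : ℝ) * (realG r k β j * (2 * (j:ℝ) - r)) := by
      rw [Finset.sum_congr rfl (fun x _ => hfix x)]
      exact sum_cnt (fun j => realG r k β j * (2 * (j:ℝ) - r))
    rw [hsum, core r k hr hk β ((k+r)/2) ((r-k)/2) (by omega) (by omega)]
    rw [show (k + r - 2) / 2 = (k + r) / 2 - 1 from by omega]
    field_simp
  · -- k > r : g vanishes identically
    have hz : ∀ x : Fin r → Bool, g x * S x = 0 := by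
      intro x
      have hc : cnt x ≤ r := by
        unfold cnt
        exact le_trans (Finset.card_filter_le _ _) (by simp)
      have hc' : ((cnt x : ℕ) : ℝ) ≤ r := by exact_mod_cast hc
      have hc0 : (0:ℝ) ≤ ((cnt x : ℕ) : ℝ) := by positivity
      have hb1 : S x ≤ r := by rw [S_eq]; linarith
      have hb2 : -(r:ℝ) ≤ S x := by rw [S_eq]; linarith
      have hkr : (r:ℝ) < (k:ℝ) := by exact_mod_cast hk
      rw [hg x,
        if_neg (show ¬ (k:ℝ) < S x by push_neg; linarith),
        if_neg (show ¬ S x = (k:ℝ) by intro h; linarith),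
        if_neg (show ¬ S x = -(k:ℝ) by intro h; linarith),
        if_neg (show ¬ S x < -(k:ℝ) by push_neg; linarith)]
      exact zero_mul _
    have z1 : (r - 1).choose ((k + r) / 2) = 0 :=
      Nat.choose_eq_zero_of_lt (by omega)
    have z2 : (r - 1).choose ((k + r - 2) / 2) = 0 :=
      Nat.choose_eq_zero_of_lt (by omega)
    rw [Finset.sum_eq_zero (fun x _ => hz x), z1, z2]
    norm_num
end
end

section
/- For the complete r-uniform r-partite hypergraph K with vertex classes of size n, every f : E(K) → [-1,1] with Σ_A f(A) = 0 satisfies min_v |Σ_{A ∋ v} f(A)| ≤ C(r-1, ⌊r/2⌋) · (n/2)^{r-1}. -/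
open Finset

noncomputable section

private def Vr : ℕ → ℝ → ℝ
  | 0, c => |c|
  | (r+1), c => Vr r (c+1) + Vr r (c-1)

private def Fz (r : ℕ) (k : ℤ) : ℤ :=
  ∑ j ∈ Finset.range (r+1), (r.choose j : ℤ) * |k + (r:ℤ) - 2*(j:ℤ)|

private lemma Fz_zero (k : ℤ) : Fz 0 k = |k| := by
  simp [Fz]

private lemma Fz_succ (r : ℕ) (k : ℤ) : Fz (r+1) k = Fz r (k+1) + Fz r (k-1) := by
  have h1 : Fz (r+1) k
      = ∑ j ∈ Finset.range (r+1), ((r+1).choose (j+1) : ℤ) * |k + ((r:ℤ)+1) - 2*((j:ℤ)+1)|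
        + ((r+1).choose 0 : ℤ) * |k + ((r:ℤ)+1) - 2*0| := by
    rw [Fz, Finset.sum_range_succ']
    push_cast
    ring_nf
  have h2 : ∀ j : ℕ, ((r+1).choose (j+1) : ℤ) = (r.choose j : ℤ) + (r.choose (j+1) : ℤ) := by
    intro j
    rw [Nat.choose_succ_succ]
    push_cast
    ring
  have ha : ∑ j ∈ Finset.range (r+1), (r.choose j : ℤ) * |k + ((r:ℤ)+1) - 2*((j:ℤ)+1)|
      = Fz r (k-1) := by
    rw [Fz]
    refine Finset.sum_congr rfl fun j _ => ?_
    rw [show k + ((r:ℤ)+1) - 2*((j:ℤ)+1) = k - 1 + (r:ℤ) - 2*(j:ℤ) from by ring]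
  have h3 : ∑ j ∈ Finset.range (r+1+1), (r.choose j : ℤ) * |k + ((r:ℤ)+1) - 2*(j:ℤ)|
      = Fz r (k+1) := by
    rw [Finset.sum_range_succ, Fz]
    simp only [Nat.choose_succ_self, Int.natCast_zero, zero_mul, add_zero]
    refine Finset.sum_congr rfl fun j _ => ?_
    rw [show k + ((r:ℤ)+1) - 2*(j:ℤ) = k + 1 + (r:ℤ) - 2*(j:ℤ) from by ring]
  have hb : (∑ j ∈ Finset.range (r+1), (r.choose (j+1) : ℤ) * |k + ((r:ℤ)+1) - 2*((j:ℤ)+1)|)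
        + ((r+1).choose 0 : ℤ) * |k + ((r:ℤ)+1) - 2*0|
      = Fz r (k+1) := by
    rw [← h3]
    rw [Finset.sum_range_succ' (fun j => (r.choose j : ℤ) * |k + ((r:ℤ)+1) - 2*(j:ℤ)|) (r+1)]
    simp only [Nat.choose_zero_right]
    push_cast
    ring_nf
  rw [h1]
  simp only [h2, add_mul]
  rw [Finset.sum_add_distrib, add_assoc, ha, hb]
  ring

private lemma Vr_int : ∀ (r : ℕ) (k : ℤ), Vr r (k : ℝ) = ((Fz r k : ℤ) : ℝ)
  | 0, k => by rw [Fz_zero]; simp [Vr]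
  | (r+1), k => by
    have e1 : (k : ℝ) + 1 = ((k+1 : ℤ) : ℝ) := by push_cast; ring
    have e2 : (k : ℝ) - 1 = ((k-1 : ℤ) : ℝ) := by push_cast; ring
    rw [show Vr (r+1) (k:ℝ) = Vr r ((k:ℝ)+1) + Vr r ((k:ℝ)-1) from rfl,
      e1, e2, Vr_int r (k+1), Vr_int r (k-1), Fz_succ]
    push_cast
    ring

private lemma abs_succ_pred (s : ℤ) : |s + 1| + |s - 1| = 2 * |s| + (if s = 0 then 2 else 0) := by
  rcases lt_trichotomy s 0 with h | h | h
  · rw [if_neg (by omega), abs_of_nonpos (by omega), abs_of_nonpos (by omega),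
      abs_of_nonpos (by omega)]
    ring
  · subst h; norm_num
  · rw [if_neg (by omega), abs_of_nonneg (by omega), abs_of_nonneg (by omega),
      abs_of_nonneg (by omega)]
    ring

private lemma Fz_succ_zero (r : ℕ) :
    Fz (r+1) 0 = 2 * Fz r 0 + (if Even r then 2 * (r.choose (r/2) : ℤ) else 0) := by
  rw [Fz_succ]
  have h1 : Fz r (0+1) + Fz r (0-1)
      = ∑ j ∈ Finset.range (r+1), ((r.choose j : ℤ) * (2 * |(0:ℤ) + (r:ℤ) - 2*(j:ℤ)|)
          + (r.choose j : ℤ) * (if (0:ℤ) + (r:ℤ) - 2*(j:ℤ) = 0 then 2 else 0)) := by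
    rw [Fz, Fz, ← Finset.sum_add_distrib]
    refine Finset.sum_congr rfl fun j _ => ?_
    rw [← mul_add, ← mul_add]
    congr 1
    rw [show (0:ℤ) + 1 + (r:ℤ) - 2*(j:ℤ) = ((0:ℤ) + (r:ℤ) - 2*(j:ℤ)) + 1 from by ring,
      show (0:ℤ) - 1 + (r:ℤ) - 2*(j:ℤ) = ((0:ℤ) + (r:ℤ) - 2*(j:ℤ)) - 1 from by ring,
      abs_succ_pred]
  rw [h1, Finset.sum_add_distrib]
  congr 1
  · rw [Fz, Finset.mul_sum]
    refine Finset.sum_congr rfl fun j _ => ?_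
    ring
  · rcases Nat.even_or_odd r with he | ho
    · obtain ⟨m, hm⟩ := he
      rw [if_pos ⟨m, hm⟩]
      have hmem : m ∈ Finset.range (r+1) := by
        rw [Finset.mem_range]; omega
      rw [Finset.sum_eq_single_of_mem m hmem]
      · rw [if_pos (by push_cast; omega), show r/2 = m from by omega]
        ring
      · intro j _ hj
        rw [if_neg (by push_cast; omega), mul_zero]
    · rw [if_neg (by simp [Nat.not_even_iff_odd.mpr ho])]
      refine Finset.sum_eq_zero fun j _ => ?_
      rw [if_neg ?_, mul_zero]
      obtain ⟨m, hm⟩ := ho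
      push_cast
      omega

private lemma Fz_val : ∀ r : ℕ, 0 < r → Fz r 0 = 2 * r * ((r-1).choose (r/2) : ℤ) := by
  intro r
  induction r with
  | zero => omega
  | succ r ih =>
    intro _
    rcases Nat.eq_zero_or_pos r with h0 | hpos
    · subst h0
      rw [show Fz 1 0 = Fz 0 (0+1) + Fz 0 (0-1) from Fz_succ 0 0, Fz_zero, Fz_zero]
      norm_num
    rw [Fz_succ_zero, ih hpos]
    rcases Nat.even_or_odd r with he | ho
    · obtain ⟨m, hm⟩ := he
      subst hm
      have hm1 : 1 ≤ m := by omega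
      rw [if_pos ⟨m, rfl⟩]
      have hsymm : (2*m-1).choose (m-1) = (2*m-1).choose m := by
        rw [show m - 1 = (2*m-1) - m from by omega]
        exact Nat.choose_symm (by omega)
      have hch : (m+m).choose m = 2 * ((2*m-1).choose m) := by
        have h := Nat.choose_succ_succ (2*m-1) (m-1)
        simp only [Nat.succ_eq_add_one] at h
        rw [show 2*m-1+1 = m+m from by omega, show m-1+1 = m from by omega, hsymm] at h
        omega
      rw [show (m+m)/2 = m from by omega, show (m+m+1)/2 = m from by omega,
        show (m+m)-1 = 2*m-1 from by omega, show (m+m+1)-1 = m+m from by omega, hch]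
      push_cast
      ring
    · obtain ⟨k, hk⟩ := ho
      subst hk
      rw [if_neg (by simp)]
      rw [show (2*k+1)/2 = k from by omega, show (2*k+1)-1 = 2*k from by omega,
        show (2*k+1+1)/2 = k+1 from by omega, show (2*k+1+1)-1 = 2*k+1 from by omega]
      have hmc : ((2*k+1) * (2*k).choose k : ℤ) = ((2*k+1).choose (k+1) : ℤ) * (k+1) := by
        exact_mod_cast congrArg (Nat.cast : ℕ → ℤ) (Nat.add_one_mul_choose_eq (2*k) k)
      push_cast
      linear_combination (4:ℤ) * hmc

private lemma abs_chord (c t : ℝ) (ht : |t| ≤ 1) :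
    |c + t| ≤ (1+t)/2 * |c+1| + (1-t)/2 * |c-1| := by
  have h1 : 0 ≤ (1+t)/2 := by have := neg_le_of_abs_le ht; linarith
  have h2 : 0 ≤ (1-t)/2 := by have := le_of_abs_le ht; linarith
  have e : c + t = (1+t)/2 * (c+1) + (1-t)/2 * (c-1) := by ring
  rw [e]
  calc |(1+t)/2 * (c+1) + (1-t)/2 * (c-1)|
      ≤ |(1+t)/2 * (c+1)| + |(1-t)/2 * (c-1)| := abs_add_le _ _
    _ = (1+t)/2 * |c+1| + (1-t)/2 * |c-1| := by
        rw [abs_mul, abs_mul, abs_of_nonneg h1, abs_of_nonneg h2]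

private lemma Vr_chord : ∀ (r : ℕ) (c t : ℝ), |t| ≤ 1 →
    Vr r (c + t) ≤ (1+t)/2 * Vr r (c+1) + (1-t)/2 * Vr r (c-1)
  | 0, c, t, ht => abs_chord c t ht
  | (r+1), c, t, ht => by
    show Vr r (c + t + 1) + Vr r (c + t - 1) ≤
      (1+t)/2 * (Vr r (c+1+1) + Vr r (c+1-1)) + (1-t)/2 * (Vr r (c-1+1) + Vr r (c-1-1))
    rw [show c + t + 1 = (c+1) + t from by ring, show c + t - 1 = (c-1) + t from by ring]
    have h1 := Vr_chord r (c+1) t ht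
    have h2 := Vr_chord r (c-1) t ht
    rw [show (c:ℝ)+1-1 = (c-1)+1 from by ring]
    rw [show (c:ℝ)+1-1 = (c-1)+1 from by ring] at h1
    linarith

private lemma Vr_nonneg : ∀ (r : ℕ) (c : ℝ), 0 ≤ Vr r c
  | 0, c => abs_nonneg c
  | (r+1), c => add_nonneg (Vr_nonneg r (c+1)) (Vr_nonneg r (c-1))

private lemma key (n : ℕ) : ∀ (r : ℕ) (w : Fin r → Fin n → ℝ),
    (∀ i, ∑ j, w i j = 0) → (∀ i j, |w i j| ≤ 1) → ∀ c : ℝ,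
    (∑ e : Fin r → Fin n, |c + ∑ i, w i (e i)|) ≤ ((n:ℝ)/2)^r * Vr r c := by
  intro r
  induction r with
  | zero =>
    intro w _ _ c
    simp [Vr]
  | succ r ih =>
    intro w hw0 hw1 c
    have hK : (0:ℝ) ≤ ((n:ℝ)/2)^r := by positivity
    have hsplit : (∑ e : Fin (r+1) → Fin n, |c + ∑ i, w i (e i)|)
        = ∑ x : Fin n, ∑ e : Fin r → Fin n, |(c + w 0 x) + ∑ i : Fin r, w i.succ (e i)| := by
      rw [← (Fin.consEquiv (fun _ : Fin (r+1) => Fin n)).sum_comp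
        (fun e : Fin (r+1) → Fin n => |c + ∑ i, w i (e i)|), Fintype.sum_prod_type]
      refine Finset.sum_congr rfl fun x _ => Finset.sum_congr rfl fun e _ => ?_
      congr 1
      rw [Fin.sum_univ_succ]
      simp [Fin.consEquiv]
      ring
    rw [hsplit]
    have step1 : ∀ x : Fin n, (∑ e : Fin r → Fin n, |(c + w 0 x) + ∑ i : Fin r, w i.succ (e i)|)
        ≤ ((n:ℝ)/2)^r * Vr r (c + w 0 x) :=
      fun x => ih (fun i => w i.succ) (fun i => hw0 i.succ) (fun i => hw1 i.succ) (c + w 0 x)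
    calc (∑ x : Fin n, ∑ e : Fin r → Fin n, |(c + w 0 x) + ∑ i : Fin r, w i.succ (e i)|)
        ≤ ∑ x : Fin n, ((n:ℝ)/2)^r * Vr r (c + w 0 x) :=
          Finset.sum_le_sum fun x _ => step1 x
      _ ≤ ∑ x : Fin n, ((n:ℝ)/2)^r *
            ((1 + w 0 x)/2 * Vr r (c+1) + (1 - w 0 x)/2 * Vr r (c-1)) :=
          Finset.sum_le_sum fun x _ =>
            mul_le_mul_of_nonneg_left (Vr_chord r c (w 0 x) (hw1 0 x)) hK
      _ = ((n:ℝ)/2)^(r+1) * Vr (r+1) c := by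
          have t1 : ∀ x : Fin n, ((n:ℝ)/2)^r *
              ((1 + w 0 x)/2 * Vr r (c+1) + (1 - w 0 x)/2 * Vr r (c-1))
              = ((n:ℝ)/2)^r * ((Vr r (c+1) + Vr r (c-1))/2)
                + w 0 x * (((n:ℝ)/2)^r * ((Vr r (c+1) - Vr r (c-1))/2)) := fun x => by ring
          simp_rw [t1]
          rw [Finset.sum_add_distrib, Finset.sum_const, ← Finset.sum_mul, hw0 0]
          simp only [Finset.card_univ, Fintype.card_fin, zero_mul, add_zero, nsmul_eq_mul]
          rw [show Vr (r+1) c = Vr r (c+1) + Vr r (c-1) from rfl, pow_succ]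
          ring

private lemma classw {n : ℕ} (hn : 0 < n) (g : Fin n → ℝ) (B : ℝ) (hB : 0 < B)
    (h0 : ∑ j, g j = 0) (hgt : ∀ j, B < |g j|) :
    ∃ w : Fin n → ℝ, (∑ j, w j = 0) ∧ (∀ j, |w j| ≤ 1) ∧ (n : ℝ) * B < ∑ j, w j * g j := by
  classical
  set P : Finset (Fin n) := Finset.univ.filter (fun j => 0 < g j) with hP
  set N : Finset (Fin n) := Finset.univ.filter (fun j => ¬ 0 < g j) with hN
  have hgP : ∀ j ∈ P, B < g j := by
    intro j hj
    have := hgt j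
    have hpos : 0 < g j := (Finset.mem_filter.mp hj).2
    rwa [abs_of_pos hpos] at this
  have hgN : ∀ j ∈ N, g j < -B := by
    intro j hj
    have := hgt j
    have hle : g j ≤ 0 := le_of_not_gt (Finset.mem_filter.mp hj).2
    rw [abs_of_nonpos hle] at this
    linarith
  have hsplit : ∑ j ∈ P, g j + ∑ j ∈ N, g j = 0 := by
    rw [hP, hN, Finset.sum_filter_add_sum_filter_not]
    exact h0
  have hPne : P.Nonempty := by
    by_contra hne
    rw [Finset.not_nonempty_iff_eq_empty] at hne
    have : ∑ j, g j < 0 := by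
      have hNu : N = Finset.univ := by
        rw [hN, Finset.filter_true_of_mem]
        intro j _
        by_contra hpos
        have : j ∈ P := Finset.mem_filter.mpr ⟨Finset.mem_univ j, hpos⟩
        simp [hne] at this
      calc ∑ j, g j = ∑ j ∈ N, g j := by rw [hNu]
        _ < ∑ j ∈ N, (0:ℝ) := Finset.sum_lt_sum_of_nonempty
            (by rw [hNu]; exact Finset.univ_nonempty_iff.mpr ⟨⟨0, hn⟩⟩)
            (fun j hj => lt_trans (hgN j hj) (by linarith))
        _ = 0 := Finset.sum_const_zero
    linarith [h0]
  have hNne : N.Nonempty := by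
    by_contra hne
    rw [Finset.not_nonempty_iff_eq_empty] at hne
    have : 0 < ∑ j, g j := by
      have hPu : P = Finset.univ := by
        rw [hP, Finset.filter_true_of_mem]
        intro j _
        by_contra hpos
        have : j ∈ N := Finset.mem_filter.mpr ⟨Finset.mem_univ j, hpos⟩
        simp [hne] at this
      calc (0:ℝ) = ∑ j ∈ P, (0:ℝ) := Finset.sum_const_zero.symm
        _ < ∑ j ∈ P, g j := Finset.sum_lt_sum_of_nonempty
            (by rw [hPu]; exact Finset.univ_nonempty_iff.mpr ⟨⟨0, hn⟩⟩)
            (fun j hj => lt_trans hB (hgP j hj))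
        _ = ∑ j, g j := by rw [hPu]
    linarith [h0]
  set p := P.card with hp
  set q := N.card with hq
  have hpq : p + q = n := by
    rw [hp, hq, hP, hN, Finset.card_filter_add_card_filter_not]
    exact Finset.card_univ.trans (Fintype.card_fin n)
  have hp1 : 1 ≤ p := Finset.card_pos.mpr hPne
  have hq1 : 1 ≤ q := Finset.card_pos.mpr hNne
  set M := max p q with hM
  have hM0 : 0 < (M:ℝ) := by
    have : 1 ≤ M := le_trans hp1 (le_max_left p q)
    exact_mod_cast Nat.lt_of_lt_of_le Nat.zero_lt_one this
  set S := ∑ j ∈ P, g j with hS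
  have hSp : (p:ℝ) * B < S := by
    calc (p:ℝ) * B = ∑ _j ∈ P, B := by rw [Finset.sum_const, nsmul_eq_mul]
      _ < S := Finset.sum_lt_sum_of_nonempty hPne hgP
  have hSq : (q:ℝ) * B < S := by
    have : ∑ j ∈ N, g j < ∑ _j ∈ N, (-B) := Finset.sum_lt_sum_of_nonempty hNne hgN
    rw [Finset.sum_const, nsmul_eq_mul] at this
    have hS2 : S = - ∑ j ∈ N, g j := by linarith [hsplit]
    rw [hS2]
    linarith
  have hSM : (M:ℝ) * B < S := by
    rcases max_cases p q with ⟨hm, _⟩ | ⟨hm, _⟩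
    · rw [hM, hm]; exact hSp
    · rw [hM, hm]; exact hSq
  refine ⟨fun j => if 0 < g j then (q:ℝ)/M else -((p:ℝ)/M), ?_, ?_, ?_⟩
  · rw [← Finset.sum_filter_add_sum_filter_not Finset.univ (fun j => 0 < g j)]
    rw [Finset.sum_congr rfl (fun j hj => if_pos (Finset.mem_filter.mp hj).2),
      Finset.sum_congr rfl (fun j (hj : j ∈ Finset.univ.filter _) =>
        if_neg (Finset.mem_filter.mp hj).2)]
    rw [Finset.sum_const, Finset.sum_const, ← hP, ← hN, ← hp, ← hq]
    rw [nsmul_eq_mul, nsmul_eq_mul]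
    field_simp
    ring
  · intro j
    dsimp only
    by_cases hj : 0 < g j
    · rw [if_pos hj, abs_of_nonneg (by positivity)]
      rw [div_le_one hM0]
      exact_mod_cast le_max_right p q
    · rw [if_neg hj, abs_neg, abs_of_nonneg (by positivity)]
      rw [div_le_one hM0]
      exact_mod_cast le_max_left p q
  · have hw : ∑ j, (if 0 < g j then (q:ℝ)/M else -((p:ℝ)/M)) * g j
        = ((n:ℝ)/M) * S := by
      rw [← Finset.sum_filter_add_sum_filter_not Finset.univ (fun j => 0 < g j)]
      rw [Finset.sum_congr rfl (fun j hj =>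
          congrArg (· * g j) (if_pos (Finset.mem_filter.mp hj).2 :
            (if 0 < g j then (q:ℝ)/M else -((p:ℝ)/M)) = (q:ℝ)/M)),
        Finset.sum_congr rfl (fun j (hj : j ∈ Finset.univ.filter _) =>
          congrArg (· * g j) (if_neg (Finset.mem_filter.mp hj).2 :
            (if 0 < g j then (q:ℝ)/M else -((p:ℝ)/M)) = -((p:ℝ)/M)))]
      rw [← Finset.mul_sum, ← Finset.mul_sum, ← hP, ← hN, ← hS]
      have hNS : ∑ j ∈ N, g j = -S := by linarith [hsplit]
      rw [hNS]
      have : (n:ℝ) = (p:ℝ) + (q:ℝ) := by exact_mod_cast hpq.symm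
      rw [this]
      field_simp
      ring
    rw [hw]
    have h1 : (n:ℝ) * B = ((n:ℝ)/M) * ((M:ℝ) * B) := by field_simp
    rw [h1]
    have hnM : 0 < (n:ℝ)/M := by positivity
    exact mul_lt_mul_of_pos_left hSM hnM


set_option maxHeartbeats 1000000 in
/-- for the complete r-uniform r-partite hypergraph with classes
of size n (edges are transversals e : Fin r → Fin n), every f : E → [-1,1] with
Σ_A f(A) = 0 satisfies min_v |Σ_{A ∋ v} f(A)| ≤ C(r-1,⌊r/2⌋)·(n/2)^{r-1}. -/
theorem stmt11 {r n : ℕ} (hr : 0 < r) (hn : 0 < n)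
    (f : (Fin r → Fin n) → ℝ)
    (hf : ∀ e, f e ∈ Set.Icc (-1 : ℝ) 1)
    (hsum : ∑ e : Fin r → Fin n, f e = 0) :
    (⨅ v : Fin r × Fin n,
        |∑ e ∈ Finset.univ.filter (fun e : Fin r → Fin n => e v.1 = v.2), f e|)
      ≤ ((r - 1).choose (r / 2) : ℝ) * ((n : ℝ) / 2) ^ (r - 1) := by
  classical
  set B : ℝ := ((r - 1).choose (r / 2) : ℝ) * ((n : ℝ) / 2) ^ (r - 1) with hBdef
  have hch_pos : 0 < (r-1).choose (r/2) := Nat.choose_pos (by omega)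
  have hB : 0 < B := by
    have h1 : (0:ℝ) < ((r - 1).choose (r / 2) : ℝ) := by exact_mod_cast hch_pos
    have h2 : (0:ℝ) < ((n:ℝ)/2)^(r-1) := by positivity
    exact mul_pos h1 h2
  by_contra hcon
  push_neg at hcon
  have hne : Nonempty (Fin r × Fin n) := ⟨(⟨0, hr⟩, ⟨0, hn⟩)⟩
  have hlt : ∀ v : Fin r × Fin n,
      B < |∑ e ∈ Finset.univ.filter (fun e : Fin r → Fin n => e v.1 = v.2), f e| :=
    fun v => lt_of_lt_of_le hcon (ciInf_le (Set.Finite.bddBelow (Set.finite_range _)) v)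
  set g : Fin r → Fin n → ℝ :=
    fun i j => ∑ e ∈ Finset.univ.filter (fun e : Fin r → Fin n => e i = j), f e with hg
  have hg0 : ∀ i, ∑ j, g i j = 0 := by
    intro i
    rw [hg]
    rw [Finset.sum_fiberwise Finset.univ (fun e : Fin r → Fin n => e i) f]
    exact hsum
  have hgB : ∀ i j, B < |g i j| := fun i j => hlt (i, j)
  choose w hw0 hw1 hwB using fun i => classw hn (g i) B hB (hg0 i) (fun j => hgB i j)
  have hx : ∀ i, ∑ j, w i j * g i j = ∑ e : Fin r → Fin n, w i (e i) * f e := by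
    intro i
    calc ∑ j, w i j * g i j
        = ∑ j, ∑ e ∈ Finset.univ.filter (fun e : Fin r → Fin n => e i = j),
            w i (e i) * f e := by
          refine Finset.sum_congr rfl fun j _ => ?_
          rw [hg, Finset.mul_sum]
          exact Finset.sum_congr rfl fun e he => by rw [(Finset.mem_filter.mp he).2]
      _ = ∑ e : Fin r → Fin n, w i (e i) * f e := Finset.sum_fiberwise _ _ _
  have h1 : (r:ℝ) * ((n:ℝ)*B) < ∑ i : Fin r, ∑ j, w i j * g i j := by
    calc (r:ℝ)*((n:ℝ)*B) = ∑ _i : Fin r, (n:ℝ)*B := by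
          rw [Finset.sum_const]
          simp [Finset.card_univ]
      _ < ∑ i : Fin r, ∑ j, w i j * g i j :=
          Finset.sum_lt_sum_of_nonempty
            (Finset.univ_nonempty_iff.mpr ⟨⟨0, hr⟩⟩) (fun i _ => hwB i)
  have h2 : ∑ i : Fin r, ∑ j, w i j * g i j
      = ∑ e : Fin r → Fin n, (∑ i, w i (e i)) * f e := by
    simp_rw [hx]
    rw [Finset.sum_comm]
    exact Finset.sum_congr rfl fun e _ => (Finset.sum_mul _ _ _).symm
  have habs : ∑ e : Fin r → Fin n, (∑ i, w i (e i)) * f e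
      ≤ ∑ e : Fin r → Fin n, |(0:ℝ) + ∑ i, w i (e i)| := by
    refine Finset.sum_le_sum fun e _ => ?_
    rw [zero_add]
    calc (∑ i, w i (e i)) * f e ≤ |(∑ i, w i (e i)) * f e| := le_abs_self _
      _ = |∑ i, w i (e i)| * |f e| := abs_mul _ _
      _ ≤ |∑ i, w i (e i)| * 1 :=
          mul_le_mul_of_nonneg_left (abs_le.mpr ⟨(hf e).1, (hf e).2⟩) (abs_nonneg _)
      _ = |∑ i, w i (e i)| := mul_one _
  have hkey := key n r w hw0 hw1 0
  have hV : Vr r 0 = 2 * (r:ℝ) * ((r-1).choose (r/2) : ℝ) := by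
    have h := Vr_int r 0
    rw [show ((0:ℤ):ℝ) = (0:ℝ) from by norm_num] at h
    rw [h, Fz_val r hr]
    push_cast
    ring
  have hpow : ((n:ℝ)/2)^r = ((n:ℝ)/2)^(r-1) * ((n:ℝ)/2) := by
    rw [← pow_succ, show (r-1)+1 = r from by omega]
  have hfin : ((n:ℝ)/2)^r * Vr r 0 = (r:ℝ) * ((n:ℝ) * B) := by
    rw [hV, hBdef, hpow]
    ring
  linarith
end
end

section
/- Let r be odd and n even, and let K be the complete r-uniform r-partite hypergraph with classes of size n. Split each class into n/2 '+' vertices and n/2 '−' vertices, and define f(A) = 1 if A contains more '+' vertices than '−', and f(A) = -1 otherwise. Then Σ_A f(A) = 0 and for every vertex v, |Σ_{A ∋ v} f(A)| = C(r-1, ⌊r/2⌋)·(n/2)^{r-1}. -/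
/-!
Write `n = 2m`. The value `f A` only depends on the set `S` of classes in which `A` picks a `+`
vertex, and each `S` is the pattern of exactly `m ^ r` transversals (of `m ^ (r - 1)` through a
given vertex, if `S` is compatible with it), so both sums become sums of the majority sign over
subsets `S` of the `r` classes. Complementation `S ↦ Sᶜ` flips the sign since `r` is odd, so the
total vanishes. The sum over `S ∋ i` is `∑ₖ C(r-1, k) sign(k + 1)`, and pairing `k` with
`r - 1 - k` leaves only the middle term `C(r-1, (r-1)/2)`; the sum over `S ∌ i` is its negative.
-/

open Finset

theorem sum_piFinset_eq_sum_prod_card_smul {ι α M : Type*} [Fintype ι] [DecidableEq ι]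
    [AddCommMonoid M] (T : ι → Finset α) (p : α → Prop) [DecidablePred p]
    (F : Finset ι → M) :
    ∑ A ∈ Fintype.piFinset T, F {k | p (A k)}
      = ∑ S : Finset ι, (∏ k, #{a ∈ T k | p a ↔ k ∈ S}) • F S := by
  rw [← sum_fiberwise' (Fintype.piFinset T) (fun A => ({k | p (A k)} : Finset ι)) F]
  refine Fintype.sum_congr _ _ fun S => ?_
  have hfiber : {A ∈ Fintype.piFinset T | ({k | p (A k)} : Finset ι) = S}
      = Fintype.piFinset fun k => {a ∈ T k | p a ↔ k ∈ S} := by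
    ext A
    simp [Finset.ext_iff, forall_and]
  rw [sum_const, hfiber, Fintype.card_piFinset]

lemma sum_filter_mem_eq_sum_powerset_erase {ι M : Type*} [Fintype ι] [DecidableEq ι]
    [AddCommMonoid M] (i : ι) (F : Finset ι → M) :
    ∑ S with i ∈ S, F S = ∑ T ∈ (univ.erase i).powerset, F (insert i T) := by
  symm
  refine sum_nbij' (insert i) (fun S => S.erase i) ?_ ?_ ?_ ?_ fun _ _ => rfl
  · simp
  · exact fun S _ => mem_coe.mpr (mem_powerset.mpr (erase_subset_erase i (subset_univ S)))
  · intro T hT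
    exact erase_insert fun hi => by simpa using mem_powerset.mp hT hi
  · intro S hS
    exact insert_erase (mem_filter.mp hS).2

theorem card_filter_val_lt_half_iff {n : ℕ} (hn : Even n) (q : Prop) [Decidable q] :
    #{a : Fin n | (a : ℕ) < n / 2 ↔ q} = n / 2 := by
  by_cases hq : q
  · simp [hq, Fin.card_filter_val_lt, Nat.div_le_self]
  · simp only [hq, iff_false]
    rw [filter_not, card_sdiff_of_subset (filter_subset _ _), Fin.card_filter_val_lt, card_univ,
      Fintype.card_fin]
    obtain ⟨m, rfl⟩ := hn
    omega

def majoritySign (r k : ℕ) : ℝ := if r < 2 * k then 1 else -1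

section

variable {r : ℕ}

lemma majoritySign_sub (hr : Odd r) {k : ℕ} (hk : k ≤ r) :
    majoritySign r (r - k) = -majoritySign r k := by
  obtain ⟨a, rfl⟩ := hr
  unfold majoritySign
  split_ifs <;> norm_num <;> omega

lemma majoritySign_succ_add_majoritySign_sub {a k : ℕ} (hk : k ≤ 2 * a) :
    majoritySign (2 * a + 1) (k + 1) + majoritySign (2 * a + 1) (2 * a - k + 1)
      = if k = a then 2 else 0 := by
  unfold majoritySign
  split_ifs <;> norm_num <;> omega

lemma sum_majoritySign_card (hr : Odd r) : ∑ S : Finset (Fin r), majoritySign r #S = 0 := by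
  have h := Fintype.sum_bijective _ compl_bijective (fun S : Finset (Fin r) => majoritySign r #Sᶜ)
    (fun S => majoritySign r #S) (fun _ => rfl)
  simp_rw [card_compl, Fintype.card_fin] at h
  rw [sum_congr rfl fun S _ =>
    majoritySign_sub hr (card_le_univ S |>.trans_eq (Fintype.card_fin r)), sum_neg_distrib] at h
  linarith

lemma sum_choose_smul_majoritySign_succ (a : ℕ) :
    ∑ k ∈ range (2 * a + 1), (2 * a).choose k • majoritySign (2 * a + 1) (k + 1)
      = (2 * a).choose a := by
  set s := ∑ k ∈ range (2 * a + 1), (2 * a).choose k • majoritySign (2 * a + 1) (k + 1)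
  have hreflect : ∑ k ∈ range (2 * a + 1),
      (2 * a).choose k • majoritySign (2 * a + 1) (2 * a - k + 1) = s := by
    rw [← sum_range_reflect]
    refine sum_congr rfl fun k hk => ?_
    have hk : k ≤ 2 * a := Nat.lt_succ_iff.mp (mem_range.mp hk)
    rw [show 2 * a + 1 - 1 - k = 2 * a - k by omega, Nat.choose_symm hk, Nat.sub_sub_self hk]
  have hpair : ∑ k ∈ range (2 * a + 1), (2 * a).choose k • (majoritySign (2 * a + 1) (k + 1)
      + majoritySign (2 * a + 1) (2 * a - k + 1)) = 2 * (2 * a).choose a := by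
    rw [sum_congr rfl fun k hk => by
      rw [majoritySign_succ_add_majoritySign_sub (Nat.lt_succ_iff.mp (mem_range.mp hk))]]
    simp only [smul_ite, smul_zero, sum_ite_eq', mem_range, nsmul_eq_mul]
    rw [if_pos (by omega), mul_comm]
  simp only [smul_add, sum_add_distrib, hreflect] at hpair
  linarith

lemma sum_majoritySign_card_of_mem (hr : Odd r) (i : Fin r) :
    ∑ S with i ∈ S, majoritySign r #S = (r - 1).choose (r / 2) := by
  obtain ⟨a, rfl⟩ := hr
  have hinsert : ∀ T ∈ (univ.erase i).powerset, #(insert i T) = #T + 1 := fun T hT =>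
    card_insert_of_notMem fun hi => by simpa using mem_powerset.mp hT hi
  rw [sum_filter_mem_eq_sum_powerset_erase, sum_congr rfl fun T hT => by rw [hinsert T hT],
    sum_powerset_apply_card (fun k => majoritySign (2 * a + 1) (k + 1)),
    card_erase_of_mem (mem_univ i), card_univ, Fintype.card_fin]
  rw [show (2 * a + 1) / 2 = a by omega, Nat.add_sub_cancel]
  exact sum_choose_smul_majoritySign_succ a

lemma sum_majoritySign_card_of_notMem (hr : Odd r) (i : Fin r) :
    ∑ S with i ∉ S, majoritySign r #S = -(r - 1).choose (r / 2) := by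
  have h := sum_filter_add_sum_filter_not univ (fun S => i ∈ S)
    fun S : Finset (Fin r) => majoritySign r #S
  rw [sum_majoritySign_card_of_mem hr, sum_majoritySign_card hr] at h
  linarith

lemma abs_sum_majoritySign_card_filter_iff_mem (hr : Odd r) (i : Fin r) (q : Prop)
    [Decidable q] :
    |∑ S with (q ↔ i ∈ S), majoritySign r #S| = (r - 1).choose (r / 2) := by
  by_cases hq : q
  · simp [hq, sum_majoritySign_card_of_mem hr]
  · simp [hq, sum_majoritySign_card_of_notMem hr]

lemma prod_card_filter_update_singleton {n : ℕ} (hn : Even n) (i : Fin r) (j : Fin n)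
    (S : Finset (Fin r)) :
    ∏ k, #{a ∈ Function.update (fun _ => univ) i {j} k |
        ((a : Fin n) : ℕ) < n / 2 ↔ k ∈ S}
      = if ((j : ℕ) < n / 2 ↔ i ∈ S) then (n / 2) ^ (r - 1) else 0 := by
  have hrest : ∏ k ∈ {i}ᶜ,
      #{a ∈ Function.update (fun _ => univ) i {j} k | ((a : Fin n) : ℕ) < n / 2 ↔ k ∈ S}
      = (n / 2) ^ (r - 1) := by
    rw [prod_congr rfl fun k hk => by
      rw [Function.update_of_ne (by simpa using hk), card_filter_val_lt_half_iff hn],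
      prod_const, card_compl, card_singleton, Fintype.card_fin]
  rw [Fintype.prod_eq_mul_prod_compl i, hrest, Function.update_self, filter_singleton]
  split_ifs <;> simp

end

theorem stmt12_general {r n : ℕ} (hro : Odd r) (hne : Even n)
    (f : (Fin r → Fin n) → ℝ)
    (hf : ∀ A : Fin r → Fin n,
      f A = if r < 2 * (Finset.univ.filter (fun i : Fin r => (A i : ℕ) < n / 2)).card
        then 1 else -1) :
    (∑ A : Fin r → Fin n, f A = 0) ∧
    ∀ v : Fin r × Fin n,
      |∑ A ∈ Finset.univ.filter (fun A : Fin r → Fin n => A v.1 = v.2), f A|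
        = ((r - 1).choose (r / 2) : ℝ) * ((n : ℝ) / 2) ^ (r - 1) := by
  have hmaj : f = fun A => majoritySign r #{k | (A k : ℕ) < n / 2} := funext hf
  simp only [hmaj]
  constructor
  · rw [← Fintype.piFinset_univ,
      sum_piFinset_eq_sum_prod_card_smul _ (fun a : Fin n => (a : ℕ) < n / 2)
        fun S => majoritySign r #S]
    simp_rw [card_filter_val_lt_half_iff hne, prod_const, ← smul_sum, sum_majoritySign_card hro,
      smul_zero]
  · rintro ⟨i, j⟩
    have hvertex : ({A | A i = j} : Finset (Fin r → Fin n))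
        = Fintype.piFinset (Function.update (fun _ => (univ : Finset (Fin n))) i {j}) := by
      rw [Fintype.piFinset_update_singleton_eq_filter_piFinset_eq _ i (mem_univ j),
        Fintype.piFinset_univ]
    have hhalf : ((n / 2 : ℕ) : ℝ) = n / 2 := Nat.cast_div (even_iff_two_dvd.mp hne) two_ne_zero
    rw [hvertex, sum_piFinset_eq_sum_prod_card_smul _ (fun a : Fin n => (a : ℕ) < n / 2)
      fun S => majoritySign r #S]
    simp_rw [prod_card_filter_update_singleton hne, ite_smul, zero_smul]
    rw [← sum_filter, ← smul_sum, nsmul_eq_mul, abs_mul,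
      abs_sum_majoritySign_card_filter_iff_mem hro]
    simp [hhalf, abs_div, mul_comm]

/-- r odd, n even. In the complete r-uniform r-partite hypergraph
with classes of size n, declaring vertex (i,j) a '+' vertex iff j < n/2, the
majority function f(A) = ±1 (according to whether A has more '+' than '−'
vertices) sums to 0 and every vertex v has |Σ_{A ∋ v} f(A)| = C(r-1,⌊r/2⌋)·(n/2)^{r-1}. -/
theorem stmt12 {r n : ℕ} (hro : Odd r) (hne : Even n) (hn : 0 < n)
    (f : (Fin r → Fin n) → ℝ)
    (hf : ∀ A : Fin r → Fin n,
      f A = if r < 2 * (Finset.univ.filter (fun i : Fin r => (A i : ℕ) < n / 2)).card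
        then 1 else -1) :
    (∑ A : Fin r → Fin n, f A = 0) ∧
    ∀ v : Fin r × Fin n,
      |∑ A ∈ Finset.univ.filter (fun A : Fin r → Fin n => A v.1 = v.2), f A|
        = ((r - 1).choose (r / 2) : ℝ) * ((n : ℝ) / 2) ^ (r - 1) :=
  stmt12_general hro hne f hf
end

section
/- Let f : E(K_n^r) → [-1,1] satisfy Σ_A f(A) = 0, where K_n^r is the complete r-uniform hypergraph on n vertices. Then there exist f' : E(K_n^r) → [-1,1] and a partition V = P ∪ N such that Σ_A f'(A) = 0, min_v |Σ_{A ∋ v} f'(A)| ≥ min_v |Σ_{A ∋ v} f(A)|, and f'(A) depends only on |A ∩ P|. -/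
/-!
Let `P` be the set of vertices of nonnegative degree and replace `f` by its average `f'` over
each class `{A : |A ∩ P| = k}`. Averaging keeps the values in `[-1, 1]` and preserves every sum
`∑_A c(|A ∩ P|) f(A)`: the total sum and, by double counting, the degree sums over `P`
(weight `|A ∩ P|`) and over its complement `N` (weight `r - |A ∩ P|`). As `f'` is invariant under
the permutations fixing `P`, its degree is constant on `P` and on `N`, so it equals the mean degree
of `f` there; the degrees of `f` have constant sign on each part, so that mean has absolute value
at least `min_v |deg_f(v)|`.
-/

open Finset

noncomputable section

/-- The edge set of the complete r-uniform hypergraph on `Fin n`: all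
r-element subsets. -/
def Edges (n r : ℕ) : Finset (Finset (Fin n)) :=
  Finset.powersetCard r Finset.univ

open scoped BigOperators

lemma le_abs_of_forall_eq_of_sum_eq {ι : Type*} {s : Finset ι} {d d' : ι → ℝ} {c m : ℝ}
    (hs : s.Nonempty) (hd' : ∀ i ∈ s, d' i = c) (hsum : ∑ i ∈ s, d' i = ∑ i ∈ s, d i)
    (hsign : (∀ i ∈ s, 0 ≤ d i) ∨ ∀ i ∈ s, d i ≤ 0) (hm : ∀ i ∈ s, m ≤ |d i|) :
    m ≤ |c| := by
  have habs : |∑ i ∈ s, d i| = ∑ i ∈ s, |d i| := by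
    rcases hsign with hpos | hneg
    · rw [abs_sum_of_nonneg hpos]
      exact sum_congr rfl fun i hi => (abs_of_nonneg (hpos i hi)).symm
    · rw [← abs_neg, ← sum_neg_distrib, abs_sum_of_nonneg fun i hi => neg_nonneg.2 (hneg i hi)]
      exact sum_congr rfl fun i hi => (abs_of_nonpos (hneg i hi)).symm
  have hcard : (0 : ℝ) < #s := by exact_mod_cast hs.card_pos
  refine le_of_mul_le_mul_left ?_ hcard
  calc (#s : ℝ) * m = ∑ _i ∈ s, m := by rw [sum_const, nsmul_eq_mul]
    _ ≤ ∑ i ∈ s, |d i| := sum_le_sum hm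
    _ = |∑ i ∈ s, d' i| := by rw [hsum, habs]
    _ = #s * |c| := by rw [sum_congr rfl hd', sum_const, nsmul_eq_mul, abs_mul, Nat.abs_cast]

section FiberAverage

variable {β κ : Type*} [DecidableEq κ] (E : Finset β) (key : β → κ) (g : β → ℝ)

def fiberAverage (A : β) : ℝ := 𝔼 B ∈ E with key B = key A, g B

variable {E key g}

lemma fiberAverage_congr {A B : β} (h : key A = key B) :
    fiberAverage E key g A = fiberAverage E key g B := by
  simp only [fiberAverage, h]

lemma fiberAverage_mem_Icc {a b : ℝ} (hg : ∀ B ∈ E, g B ∈ Set.Icc a b) {A : β} (hA : A ∈ E) :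
    fiberAverage E key g A ∈ Set.Icc a b := by
  have hne : (E.filter fun B => key B = key A).Nonempty := ⟨A, mem_filter.2 ⟨hA, rfl⟩⟩
  exact ⟨le_expect hne fun B hB => (hg B (mem_filter.1 hB).1).1,
    expect_le hne fun B hB => (hg B (mem_filter.1 hB).1).2⟩

lemma sum_mul_fiberAverage (c : κ → ℝ) :
    ∑ A ∈ E, c (key A) * fiberAverage E key g A = ∑ A ∈ E, c (key A) * g A := by
  rw [← sum_fiberwise_of_maps_to (fun A hA => mem_image_of_mem key hA),
    ← sum_fiberwise_of_maps_to (g := key) (fun A hA => mem_image_of_mem key hA)]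
  refine sum_congr rfl fun k _ => ?_
  have hfiber : ∀ A ∈ E.filter (key · = k), c (key A) * fiberAverage E key g A
      = c k * 𝔼 B ∈ E with key B = k, g B := by
    intro A hA
    simp only [fiberAverage, (mem_filter.1 hA).2]
  rw [sum_congr rfl hfiber, sum_const, nsmul_eq_mul, mul_left_comm, card_mul_expect, mul_sum]
  exact sum_congr rfl fun A hA => by rw [(mem_filter.1 hA).2]

end FiberAverage

section Degree

variable {α : Type*} [DecidableEq α]

def weightedDegree (E : Finset (Finset α)) (g : Finset α → ℝ) (v : α) : ℝ :=
  ∑ A ∈ E with v ∈ A, g A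

variable {E : Finset (Finset α)} {g : Finset α → ℝ}

lemma sum_weightedDegree (S : Finset α) :
    ∑ w ∈ S, weightedDegree E g w = ∑ A ∈ E, (#(A ∩ S) : ℝ) * g A := by
  simp only [weightedDegree, sum_filter]
  rw [sum_comm]
  refine sum_congr rfl fun A _ => ?_
  rw [sum_ite_mem, sum_const, nsmul_eq_mul, inter_comm]

lemma sum_weightedDegree_fiberAverage {κ : Type*} [DecidableEq κ] {key : Finset α → κ}
    {S : Finset α} (c : κ → ℝ) (hc : ∀ A ∈ E, (#(A ∩ S) : ℝ) = c (key A)) :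
    ∑ w ∈ S, weightedDegree E (fiberAverage E key g) w = ∑ w ∈ S, weightedDegree E g w := by
  have hweight : ∀ h : Finset α → ℝ, ∑ A ∈ E, (#(A ∩ S) : ℝ) * h A = ∑ A ∈ E, c (key A) * h A :=
    fun h => sum_congr rfl fun A hA => by rw [hc A hA]
  rw [sum_weightedDegree, sum_weightedDegree, hweight, hweight, sum_mul_fiberAverage]

lemma card_map_inter_of_forall_mem_iff {P : Finset α} (σ : Equiv.Perm α)
    (hσ : ∀ x, σ x ∈ P ↔ x ∈ P) (A : Finset α) : #(A.map σ.toEmbedding ∩ P) = #(A ∩ P) := by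
  have : A.map σ.toEmbedding ∩ P = (A ∩ P).map σ.toEmbedding := by
    ext x
    obtain ⟨y, rfl⟩ := σ.surjective x
    simp [hσ]
  rw [this, card_map]

variable [Fintype α] {r : ℕ}

lemma weightedDegree_powersetCard_apply_perm (σ : Equiv.Perm α)
    (hg : ∀ A, g (A.map σ.toEmbedding) = g A) (v : α) :
    weightedDegree (powersetCard r univ) g (σ v) = weightedDegree (powersetCard r univ) g v := by
  refine sum_nbij' (fun A => A.map σ.symm.toEmbedding) (fun A => A.map σ.toEmbedding)
    ?_ ?_ ?_ ?_ fun A _ => ?_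
  · intro A hA
    simp_all [mem_powersetCard]
  · intro A hA
    simp_all [mem_powersetCard]
  · intro A _
    simp [map_map]
  · intro A _
    simp [map_map]
  · rw [← hg (A.map σ.symm.toEmbedding), map_map]
    simp

lemma weightedDegree_fiberAverage_eq_of_mem_iff {P : Finset α} {v w : α} (h : v ∈ P ↔ w ∈ P) :
    weightedDegree (powersetCard r univ)
        (fiberAverage (powersetCard r univ) (fun A => #(A ∩ P)) g) v
      = weightedDegree (powersetCard r univ)
        (fiberAverage (powersetCard r univ) (fun A => #(A ∩ P)) g) w := by
  have hσ : ∀ x, Equiv.swap v w x ∈ P ↔ x ∈ P := by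
    intro x
    rw [Equiv.swap_apply_def]
    split_ifs <;> simp_all
  conv_rhs => rw [← Equiv.swap_apply_left v w]
  exact (weightedDegree_powersetCard_apply_perm _
    (fun A => fiberAverage_congr (card_map_inter_of_forall_mem_iff _ hσ A)) v).symm

lemma le_abs_weightedDegree_fiberAverage {P : Finset α} {m : ℝ}
    (hP : ∀ v ∈ P, 0 ≤ weightedDegree (powersetCard r univ) g v)
    (hN : ∀ v ∉ P, weightedDegree (powersetCard r univ) g v ≤ 0)
    (hm : ∀ v, m ≤ |weightedDegree (powersetCard r univ) g v|) (v : α) :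
    m ≤ |weightedDegree (powersetCard r univ)
        (fiberAverage (powersetCard r univ) (fun A => #(A ∩ P)) g) v| := by
  by_cases hv : v ∈ P
  · exact le_abs_of_forall_eq_of_sum_eq ⟨v, hv⟩
      (fun w hw => weightedDegree_fiberAverage_eq_of_mem_iff (iff_of_true hw hv))
      (sum_weightedDegree_fiberAverage (fun k => (k : ℝ)) fun A _ => rfl) (Or.inl hP)
      fun w _ => hm w
  · refine le_abs_of_forall_eq_of_sum_eq (s := Pᶜ) ⟨v, mem_compl.2 hv⟩
      (fun w hw => weightedDegree_fiberAverage_eq_of_mem_iff (iff_of_false (mem_compl.1 hw) hv))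
      (sum_weightedDegree_fiberAverage (fun k => (r : ℝ) - k) fun A hA => ?_)
      (Or.inr fun w hw => hN w (mem_compl.1 hw)) fun w _ => hm w
    rw [← sdiff_eq_inter_compl, eq_sub_iff_add_eq, ← (mem_powersetCard.1 hA).2]
    exact_mod_cast card_sdiff_add_card_inter A P

end Degree

/-- Lemma compave: averaging reduction for the complete
hypergraph. -/
theorem stmt13 {n r : ℕ} (f : Finset (Fin n) → ℝ)
    (hf : ∀ A ∈ Edges n r, f A ∈ Set.Icc (-1 : ℝ) 1)
    (hsum : ∑ A ∈ Edges n r, f A = 0) :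
    ∃ (f' : Finset (Fin n) → ℝ) (P : Finset (Fin n)),
      (∀ A ∈ Edges n r, f' A ∈ Set.Icc (-1 : ℝ) 1) ∧
      (∑ A ∈ Edges n r, f' A = 0) ∧
      (⨅ v : Fin n, |∑ A ∈ (Edges n r).filter (fun A => v ∈ A), f A|)
        ≤ (⨅ v : Fin n, |∑ A ∈ (Edges n r).filter (fun A => v ∈ A), f' A|) ∧
      (∀ A ∈ Edges n r, ∀ B ∈ Edges n r,
        (A ∩ P).card = (B ∩ P).card → f' A = f' B) := by
  set P := univ.filter fun v => 0 ≤ weightedDegree (Edges n r) f v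
  refine ⟨fiberAverage (Edges n r) (fun A => #(A ∩ P)) f, P,
    fun A hA => fiberAverage_mem_Icc hf hA, ?_, ?_, fun A _ B _ h => fiberAverage_congr h⟩
  · simpa [hsum] using
      sum_mul_fiberAverage (E := Edges n r) (key := fun A => #(A ∩ P)) (g := f) 1
  · rcases isEmpty_or_nonempty (Fin n) with hn | hn
    · simp [Real.iInf_of_isEmpty]
    · have hbdd := (Set.finite_range fun v => |weightedDegree (Edges n r) f v|).bddBelow
      exact le_ciInf (le_abs_weightedDegree_fiberAverage (fun v hv => (mem_filter.1 hv).2)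
        (fun v hv => (not_le.1 fun h => hv (mem_filter.2 ⟨mem_univ v, h⟩)).le)
        fun v => ciInf_le hbdd v)
end
end

section
/- For integers n, k, r, s with 0 ≤ s ≤ r and k ≤ n/2 - 1, let G(k,s) = [Σ_{ℓ=0}^r |s-ℓ|·C(n-k,ℓ)·C(k,r-ℓ)]/(n-k). Then G(k+1,s) - G(k,s) = s·[Σ_{ℓ=0}^s C(n-k,ℓ)C(k,r-ℓ) - Σ_{ℓ=s+1}^r C(n-k,ℓ)C(k,r-ℓ)] / [(n-k)(n-k-1)]. -/
/-!
Put `m = n - k`, so that `G(k + 1, s) = S' / (m - 1)` and `G(k, s) = S / m`. Absorbing `m` into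
`C(m - 1, ℓ)` and splitting `C(k + 1, r - ℓ)` by Pascal's rule writes `m S' - (m - 1) S` as one sum
against `C(m, ℓ) C(k, r - ℓ)` with weight `f ℓ + ℓ (f (ℓ - 1) - f ℓ)`, where `f ℓ = |s - ℓ|`.
This weight is `s` for `ℓ ≤ s` and `-s` beyond.
-/

open Finset

section Binomial

variable {R : Type*} [CommRing R]

theorem Nat.cast_sub_mul_choose (m ℓ : ℕ) :
    ((m : R) - ℓ) * m.choose ℓ = (ℓ + 1) * m.choose (ℓ + 1) := by
  rcases le_or_gt ℓ m with h | h
  · have := congrArg (Nat.cast (R := R)) (Nat.choose_succ_right_eq m ℓ)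
    push_cast [h] at this
    linear_combination -this
  · simp [Nat.choose_eq_zero_of_lt h, Nat.choose_eq_zero_of_lt (h.trans (Nat.lt_succ_self ℓ))]

theorem Nat.cast_mul_choose_sub_one (m ℓ : ℕ) :
    (m : R) * (m - 1).choose ℓ = ((m : R) - ℓ) * m.choose ℓ := by
  rw [Nat.cast_sub_mul_choose]
  rcases m with _ | m
  · simp
  · have := congrArg (Nat.cast (R := R)) (Nat.add_one_mul_choose_eq m ℓ)
    push_cast at this
    simpa [mul_comm] using this

theorem sum_range_mul_choose_add_one (h : ℕ → R) (k r : ℕ) :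
    ∑ ℓ ∈ range (r + 1), h ℓ * ((k + 1).choose (r - ℓ) : R) =
      ∑ ℓ ∈ range (r + 1), h ℓ * (k.choose (r - ℓ) : R) +
        ∑ ℓ ∈ range r, h ℓ * (k.choose (r - (ℓ + 1)) : R) := by
  rw [sum_range_succ, sum_range_succ (fun ℓ ↦ h ℓ * (k.choose (r - ℓ) : R)), add_right_comm,
    ← sum_add_distrib]
  congr 1
  · refine sum_congr rfl fun ℓ hℓ ↦ ?_
    rw [show r - ℓ = r - (ℓ + 1) + 1 by grind, Nat.choose_succ_succ']
    push_cast
    ring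
  · simp

/-- At `ℓ = 0`, `f (ℓ - 1)` is `f 0` by truncated subtraction, but it is multiplied by `ℓ = 0`. -/
theorem mul_sum_choose_sub_one_mul_choose_add_one (f : ℕ → R) (m k r : ℕ) :
    (m : R) * ∑ ℓ ∈ range (r + 1), f ℓ * (m - 1).choose ℓ * (k + 1).choose (r - ℓ)
      - ((m : R) - 1) * ∑ ℓ ∈ range (r + 1), f ℓ * m.choose ℓ * k.choose (r - ℓ)
    = ∑ ℓ ∈ range (r + 1), (f ℓ + ℓ * (f (ℓ - 1) - f ℓ)) * m.choose ℓ * k.choose (r - ℓ) := by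
  have absorb : (m : R) * ∑ ℓ ∈ range (r + 1), f ℓ * (m - 1).choose ℓ * (k + 1).choose (r - ℓ)
      = ∑ ℓ ∈ range (r + 1), f ℓ * (((m : R) - ℓ) * m.choose ℓ) * (k + 1).choose (r - ℓ) := by
    rw [mul_sum]
    refine sum_congr rfl fun ℓ _ ↦ ?_
    rw [← Nat.cast_mul_choose_sub_one]
    ring
  have shift : ∑ ℓ ∈ range r, f ℓ * (((m : R) - ℓ) * m.choose ℓ) * k.choose (r - (ℓ + 1))
      = ∑ ℓ ∈ range (r + 1), f (ℓ - 1) * ℓ * m.choose ℓ * k.choose (r - ℓ) := by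
    rw [sum_range_succ', Nat.cast_zero, mul_zero, zero_mul, zero_mul, add_zero]
    refine sum_congr rfl fun ℓ _ ↦ ?_
    rw [Nat.cast_sub_mul_choose, Nat.add_sub_cancel, Nat.cast_succ]
    ring
  rw [absorb, sum_range_mul_choose_add_one, shift, mul_sum, ← sum_add_distrib, ← sum_sub_distrib]
  exact sum_congr rfl fun ℓ _ ↦ by ring

theorem sum_range_ite_le_neg_mul (c : R) (a : ℕ → R) {s r : ℕ} (hs : s ≤ r) :
    ∑ ℓ ∈ range (r + 1), (if ℓ ≤ s then c else -c) * a ℓ =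
      c * (∑ ℓ ∈ range (s + 1), a ℓ - ∑ ℓ ∈ Icc (s + 1) r, a ℓ) := by
  rw [← sum_range_add_sum_Ico _ (Nat.add_le_add_right hs 1), Ico_add_one_right_eq_Icc, mul_sub,
    mul_sum, mul_sum, sub_eq_add_neg, ← sum_neg_distrib]
  congr 1
  · exact sum_congr rfl fun ℓ hℓ ↦ by rw [if_pos (Nat.lt_succ_iff.mp (mem_range.mp hℓ))]
  · refine sum_congr rfl fun ℓ hℓ ↦ ?_
    rw [if_neg (by grind), neg_mul]

end Binomial

theorem abs_sub_add_mul_abs_sub_sub_abs_sub {R : Type*} [CommRing R] [LinearOrder R]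
    [IsStrictOrderedRing R] (s ℓ : ℕ) :
    |(s : R) - ℓ| + ℓ * (|(s : R) - (ℓ - 1 : ℕ)| - |(s : R) - ℓ|) =
      if ℓ ≤ s then (s : R) else -(s : R) := by
  rcases ℓ with _ | j
  · simp
  · rw [Nat.add_sub_cancel]
    push_cast
    split_ifs with h
    · have h' : (j : R) + 1 ≤ s := by exact_mod_cast h
      rw [abs_of_nonneg (by linarith), abs_of_nonneg (by linarith)]
      ring
    · have h' : (s : R) ≤ j := by exact_mod_cast Nat.le_of_not_lt (by omega)
      rw [abs_of_nonpos (by linarith), abs_of_nonpos (by linarith)]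
      ring

theorem stmt16_general (n k r s : ℕ) (hs : s ≤ r)
    (hnk : k + 2 ≤ n) :
    (∑ ℓ ∈ Finset.range (r + 1),
        |(s : ℝ) - ℓ| * ((n - (k+1)).choose ℓ : ℝ) * ((k+1).choose (r - ℓ) : ℝ))
      / ((n : ℝ) - (k + 1))
    - (∑ ℓ ∈ Finset.range (r + 1),
        |(s : ℝ) - ℓ| * ((n - k).choose ℓ : ℝ) * (k.choose (r - ℓ) : ℝ))
      / ((n : ℝ) - k)
    = (s : ℝ) *
        ((∑ ℓ ∈ Finset.range (s + 1), ((n - k).choose ℓ : ℝ) * (k.choose (r - ℓ) : ℝ))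
          - ∑ ℓ ∈ Finset.Icc (s + 1) r, ((n - k).choose ℓ : ℝ) * (k.choose (r - ℓ) : ℝ))
        / (((n : ℝ) - k) * ((n : ℝ) - k - 1)) := by
  obtain ⟨m, rfl⟩ : ∃ m, n = k + m := ⟨n - k, by omega⟩
  have hm : (2 : ℝ) ≤ m := by exact_mod_cast (by omega : 2 ≤ m)
  have key := mul_sum_choose_sub_one_mul_choose_add_one (fun ℓ ↦ |(s : ℝ) - ℓ|) m k r
  simp only [abs_sub_add_mul_abs_sub_sub_abs_sub, mul_assoc, sum_range_ite_le_neg_mul _ _ hs]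
    at key
  rw [show k + m - (k + 1) = m - 1 by omega, Nat.add_sub_cancel_left]
  push_cast
  rw [div_sub_div _ _ (by linarith) (by linarith), div_eq_div_iff (by nlinarith) (by nlinarith)]
  simp only [mul_assoc] at key ⊢
  linear_combination (m * ((m : ℝ) - 1)) * key

/-- difference formula for
G(k,s) = [Σ_{ℓ=0}^r |s-ℓ|·C(n-k,ℓ)·C(k,r-ℓ)]/(n-k). -/
theorem stmt16 (n k r s : ℕ) (hs : s ≤ r) (hk : (k : ℝ) ≤ (n : ℝ) / 2 - 1)
    (hnk : k + 2 ≤ n) :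
    (∑ ℓ ∈ Finset.range (r + 1),
        |(s : ℝ) - ℓ| * ((n - (k+1)).choose ℓ : ℝ) * ((k+1).choose (r - ℓ) : ℝ))
      / ((n : ℝ) - (k + 1))
    - (∑ ℓ ∈ Finset.range (r + 1),
        |(s : ℝ) - ℓ| * ((n - k).choose ℓ : ℝ) * (k.choose (r - ℓ) : ℝ))
      / ((n : ℝ) - k)
    = (s : ℝ) *
        ((∑ ℓ ∈ Finset.range (s + 1), ((n - k).choose ℓ : ℝ) * (k.choose (r - ℓ) : ℝ))
          - ∑ ℓ ∈ Finset.Icc (s + 1) r, ((n - k).choose ℓ : ℝ) * (k.choose (r - ℓ) : ℝ))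
        / (((n : ℝ) - k) * ((n : ℝ) - k - 1)) :=
  stmt16_general n k r s hs hnk
end

section
/- For every f : E(K_n^r) → [-1,1] with Σ_A f(A) = 0, setting k = ⌈n/2⌉, we have min_v |Σ_{A∋v} f(A)| ≤ (1/k)·Σ_{ℓ=0}^r |⌈r/2⌉ - ℓ|·C(n-k, ℓ)·C(k, r-ℓ). -/
open Finset

noncomputable section

/-- Theorem compthm: with k = ⌈n/2⌉,
min_v |Σ_{A∋v} f(A)| ≤ (1/k)·Σ_{ℓ=0}^r |⌈r/2⌉-ℓ|·C(n-k,ℓ)·C(k,r-ℓ). -/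
theorem stmt17 {n r : ℕ} (hn : 0 < n) (f : Finset (Fin n) → ℝ)
    (hf : ∀ A ∈ Edges n r, f A ∈ Set.Icc (-1 : ℝ) 1)
    (hsum : ∑ A ∈ Edges n r, f A = 0) :
    (⨅ v : Fin n, |∑ A ∈ (Edges n r).filter (fun A => v ∈ A), f A|)
      ≤ (∑ ℓ ∈ Finset.range (r + 1),
          |(((r + 1) / 2 : ℕ) : ℝ) - ℓ|
            * ((n - (n + 1) / 2).choose ℓ : ℝ) * (((n + 1) / 2).choose (r - ℓ) : ℝ))
        / (((n + 1) / 2 : ℕ) : ℝ) := by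
  classical
  set k : ℕ := (n + 1) / 2 with hk
  have hk0 : 0 < k := by omega
  have hkn : k ≤ n := by omega
  set d : Fin n → ℝ := fun v => ∑ A ∈ (Edges n r).filter (fun A => v ∈ A), f A with hd
  set T : ℝ := ∑ ℓ ∈ Finset.range (r + 1),
      |(((r + 1) / 2 : ℕ) : ℝ) - ℓ| * ((n - k).choose ℓ : ℝ) * ((k.choose (r - ℓ)) : ℝ)
    with hT
  -- key bound for any k-set S
  have key : ∀ S : Finset (Fin n), S.card = k → |∑ v ∈ S, d v| ≤ T := by
    intro S hS
    have swap : ∑ v ∈ S, d v = ∑ A ∈ Edges n r, ((A ∩ S).card : ℝ) * f A := by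
      simp only [hd, Finset.sum_filter]
      rw [Finset.sum_comm]
      refine Finset.sum_congr rfl fun A _ => ?_
      rw [← Finset.sum_filter, Finset.filter_mem_eq_inter, Finset.sum_const,
        Finset.inter_comm, nsmul_eq_mul]
    set c : ℝ := ((r - (r + 1) / 2 : ℕ) : ℝ) with hc
    have step2 : ∑ v ∈ S, d v = ∑ A ∈ Edges n r, (((A ∩ S).card : ℝ) - c) * f A := by
      rw [swap]
      simp only [sub_mul, Finset.sum_sub_distrib, ← Finset.mul_sum, hsum, mul_zero, sub_zero]
    have habs1 : |∑ v ∈ S, d v| ≤ ∑ A ∈ Edges n r, |(((A ∩ S).card : ℝ) - c)| := by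
      rw [step2]
      refine (Finset.abs_sum_le_sum_abs _ _).trans (Finset.sum_le_sum fun A hA => ?_)
      rw [abs_mul]
      have hfA := hf A hA
      have : |f A| ≤ 1 := abs_le.mpr ⟨hfA.1, hfA.2⟩
      nlinarith [abs_nonneg (((A ∩ S).card : ℝ) - c)]
    -- rewrite each term in terms of ℓ = |A \ S|
    have hterm : ∀ A ∈ Edges n r,
        |(((A ∩ S).card : ℝ) - c)| = |(((r + 1) / 2 : ℕ) : ℝ) - ((A \ S).card : ℝ)| := by
      intro A hA
      have hAcard : A.card = r := by
        simpa [Edges, Finset.mem_powersetCard] using hA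
      have h1 : (A ∩ S).card + (A \ S).card = r := by
        rw [Finset.card_inter_add_card_sdiff, hAcard]
      have h2 : (r + 1) / 2 ≤ r := by omega
      have h1' : ((A ∩ S).card : ℝ) + ((A \ S).card : ℝ) = r := by exact_mod_cast h1
      congr 1
      rw [hc, Nat.cast_sub h2]
      push_cast
      linarith
    have habs2 : ∑ A ∈ Edges n r, |(((A ∩ S).card : ℝ) - c)|
        = ∑ A ∈ Edges n r, |(((r + 1) / 2 : ℕ) : ℝ) - ((A \ S).card : ℝ)| :=
      Finset.sum_congr rfl hterm
    -- counting
    have count : ∀ ℓ : ℕ, (((Edges n r).filter (fun A => (A \ S).card = ℓ)).card : ℝ)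
        ≤ ((n - k).choose ℓ : ℝ) * ((k.choose (r - ℓ)) : ℝ) := by
      intro ℓ
      have hinj : ((Edges n r).filter (fun A => (A \ S).card = ℓ)).card
          ≤ ((Finset.powersetCard ℓ Sᶜ) ×ˢ (Finset.powersetCard (r - ℓ) S)).card := by
        apply Finset.card_le_card_of_injOn (fun A => (A \ S, A ∩ S))
        · intro A hA
          simp only [Finset.mem_coe, Finset.mem_filter, Edges, Finset.mem_powersetCard] at hA
          obtain ⟨⟨-, hr⟩, hl⟩ := hA
          have h1 : (A ∩ S).card + (A \ S).card = A.card :=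
            Finset.card_inter_add_card_sdiff A S
          simp only [Finset.mem_coe, Finset.mem_product, Finset.mem_powersetCard]
          refine ⟨⟨fun x hx => ?_, hl⟩, Finset.inter_subset_right, by omega⟩
          rw [Finset.mem_compl]
          exact (Finset.mem_sdiff.mp hx).2
        · intro A _ B _ hAB
          have h1 : A \ S = B \ S := (Prod.ext_iff.mp hAB).1
          have h2 : A ∩ S = B ∩ S := (Prod.ext_iff.mp hAB).2
          calc A = (A \ S) ∪ (A ∩ S) := (Finset.sdiff_union_inter A S).symm
            _ = (B \ S) ∪ (B ∩ S) := by rw [h1, h2]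
            _ = B := Finset.sdiff_union_inter B S
      have hcompl : (Sᶜ : Finset (Fin n)).card = n - k := by
        rw [Finset.card_compl, hS, Fintype.card_fin]
      rw [Finset.card_product, Finset.card_powersetCard, Finset.card_powersetCard,
        hcompl, hS] at hinj
      exact_mod_cast hinj
    -- fiberwise sum
    have hfiber : ∑ A ∈ Edges n r, |(((r + 1) / 2 : ℕ) : ℝ) - ((A \ S).card : ℝ)| ≤ T := by
      have hmaps : ∀ A ∈ Edges n r, (A \ S).card ∈ Finset.range (r + 1) := by
        intro A hA
        have hAcard : A.card = r := by
          simpa [Edges, Finset.mem_powersetCard] using hA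
        have := Finset.card_le_card (Finset.sdiff_subset (s := A) (t := S))
        rw [Finset.mem_range]
        omega
      rw [← Finset.sum_fiberwise_of_maps_to' hmaps
        (fun ℓ => |(((r + 1) / 2 : ℕ) : ℝ) - (ℓ : ℝ)|)]
      rw [hT]
      refine Finset.sum_le_sum fun ℓ _ => ?_
      rw [Finset.sum_const, nsmul_eq_mul]
      calc ((((Edges n r).filter (fun A => (A \ S).card = ℓ)).card : ℝ))
            * |(((r + 1) / 2 : ℕ) : ℝ) - (ℓ : ℝ)|
          ≤ (((n - k).choose ℓ : ℝ) * ((k.choose (r - ℓ)) : ℝ))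
            * |(((r + 1) / 2 : ℕ) : ℝ) - (ℓ : ℝ)| :=
            mul_le_mul_of_nonneg_right (count ℓ) (abs_nonneg _)
        _ = |(((r + 1) / 2 : ℕ) : ℝ) - (ℓ : ℝ)| * ((n - k).choose ℓ : ℝ)
            * ((k.choose (r - ℓ)) : ℝ) := by ring
    exact habs1.trans (habs2 ▸ hfiber)
  -- choose a sign-homogeneous k-set
  have hsplit : k ≤ (Finset.univ.filter fun v => 0 ≤ d v).card
      ∨ k ≤ (Finset.univ.filter fun v => d v ≤ 0).card := by
    by_contra h
    push_neg at h
    have hcover : (Finset.univ.filter fun v => 0 ≤ d v)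
        ∪ (Finset.univ.filter fun v => d v ≤ 0) = (Finset.univ : Finset (Fin n)) := by
      ext v
      simp only [Finset.mem_union, Finset.mem_filter, Finset.mem_univ, true_and, iff_true]
      exact (le_total 0 (d v)).imp id id
    have hle := Finset.card_union_le (Finset.univ.filter fun v => 0 ≤ d v)
      (Finset.univ.filter fun v => d v ≤ 0)
    rw [hcover, Finset.card_univ, Fintype.card_fin] at hle
    omega
  obtain ⟨S, hSsub, hS, hsign⟩ : ∃ S : Finset (Fin n), True ∧ S.card = k ∧
      ((∀ v ∈ S, 0 ≤ d v) ∨ (∀ v ∈ S, d v ≤ 0)) := by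
    rcases hsplit with h | h
    · obtain ⟨S, hSsub, hScard⟩ := Finset.exists_subset_card_eq h
      exact ⟨S, trivial, hScard, Or.inl fun v hv =>
        (Finset.mem_filter.mp (hSsub hv)).2⟩
    · obtain ⟨S, hSsub, hScard⟩ := Finset.exists_subset_card_eq h
      exact ⟨S, trivial, hScard, Or.inr fun v hv =>
        (Finset.mem_filter.mp (hSsub hv)).2⟩
  have habs : ∑ v ∈ S, |d v| = |∑ v ∈ S, d v| := by
    rcases hsign with h | h
    · rw [Finset.abs_sum_of_nonneg h]
      exact Finset.sum_congr rfl fun v hv => abs_of_nonneg (h v hv)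
    · rw [abs_of_nonpos (Finset.sum_nonpos h), ← Finset.sum_neg_distrib]
      exact Finset.sum_congr rfl fun v hv => abs_of_nonpos (h v hv)
  have hbdd : BddBelow (Set.range fun v : Fin n => |d v|) :=
    ⟨0, by rintro x ⟨v, rfl⟩; exact abs_nonneg _⟩
  have hinf : (⨅ v : Fin n, |d v|) * k ≤ ∑ v ∈ S, |d v| := by
    calc (⨅ v : Fin n, |d v|) * k = ∑ _v ∈ S, ⨅ v : Fin n, |d v| := by
          rw [Finset.sum_const, hS, nsmul_eq_mul, mul_comm]
      _ ≤ ∑ v ∈ S, |d v| := Finset.sum_le_sum fun v _ => ciInf_le hbdd v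
  have hfinal : (⨅ v : Fin n, |d v|) * k ≤ T := by
    rw [habs] at hinf
    exact hinf.trans (key S hS)
  have hkpos : (0 : ℝ) < (k : ℝ) := by exact_mod_cast hk0
  show (⨅ v : Fin n, |d v|) ≤ T / (k : ℝ)
  rw [le_div_iff₀ hkpos]
  exact hfinal
end
end

section
/- Let n be even, r ≥ 1, and partition the vertex set of K_n^r into V_1, V_2 with |V_1| = |V_2| = n/2. Define f(A) = 1 if |A∩V_1| > r/2, f(A) = -1 if |A∩V_1| < r/2, and f(A) = 0 if |A∩V_1| = r/2. Then Σ_A f(A) = 0 and for every vertex v, |Σ_{A∋v} f(A)| = (2/n)·Σ_{ℓ=0}^r |⌈r/2⌉ - ℓ|·C(n/2, ℓ)·C(n/2, r-ℓ). -/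
open Finset

noncomputable section

lemma count_gen {α : Type*} [DecidableEq α] (U S : Finset α) (hS : S ⊆ U) (r ℓ : ℕ) (hl : ℓ ≤ r) :
    ((Finset.powersetCard r U).filter (fun A => (A ∩ S).card = ℓ)).card
      = S.card.choose ℓ * (U \ S).card.choose (r - ℓ) := by
  rw [← Finset.card_powersetCard, ← Finset.card_powersetCard, ← Finset.card_product]
  apply Finset.card_nbij' (fun A => (A ∩ S, A \ S)) (fun p => p.1 ∪ p.2)
  · intro A hA
    simp only [Finset.mem_coe, mem_filter, Finset.mem_powersetCard] at hA
    obtain ⟨⟨hAU, hAcard⟩, hAl⟩ := hA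
    have hds : (A ∩ S).card + (A \ S).card = A.card := Finset.card_inter_add_card_sdiff A S
    simp only [Finset.mem_coe, Finset.mem_product, Finset.mem_powersetCard]
    exact ⟨⟨Finset.inter_subset_right, hAl⟩,
      Finset.sdiff_subset_sdiff hAU (Finset.Subset.refl S), by omega⟩
  · intro p hp
    simp only [Finset.mem_coe, Finset.mem_product, Finset.mem_powersetCard] at hp
    obtain ⟨⟨hB, hBc⟩, hC, hCc⟩ := hp
    have hdisj : Disjoint p.1 p.2 := by
      rw [Finset.disjoint_left]
      intro x hx1 hx2
      exact (Finset.mem_sdiff.1 (hC hx2)).2 (hB hx1)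
    simp only [Finset.mem_coe, mem_filter, Finset.mem_powersetCard]
    refine ⟨⟨Finset.union_subset (hB.trans hS) (hC.trans Finset.sdiff_subset), ?_⟩, ?_⟩
    · rw [Finset.card_union_of_disjoint hdisj, hBc, hCc]; omega
    · rw [Finset.union_inter_distrib_right, Finset.inter_eq_left.2 hB]
      have : p.2 ∩ S = ∅ := by
        rw [Finset.eq_empty_iff_forall_notMem]
        intro x hx
        rcases Finset.mem_inter.1 hx with ⟨h2, h3⟩
        exact (Finset.mem_sdiff.1 (hC h2)).2 h3
      rw [this, Finset.union_empty, hBc]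
  · intro A _
    exact sup_inf_sdiff A S
  · intro p hp
    simp only [Finset.mem_coe, Finset.mem_product, Finset.mem_powersetCard] at hp
    obtain ⟨⟨hB, hBc⟩, hC, hCc⟩ := hp
    have h2 : p.2 ∩ S = ∅ := by
      rw [Finset.eq_empty_iff_forall_notMem]
      intro x hx
      rcases Finset.mem_inter.1 hx with ⟨h2, h3⟩
      exact (Finset.mem_sdiff.1 (hC h2)).2 h3
    have h3 : (p.1 ∪ p.2) ∩ S = p.1 := by
      rw [Finset.union_inter_distrib_right, Finset.inter_eq_left.2 hB, h2, Finset.union_empty]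
    have h4 : (p.1 ∪ p.2) \ S = p.2 := by
      rw [Finset.union_sdiff_distrib, Finset.sdiff_eq_empty_iff_subset.2 hB, Finset.empty_union,
        Finset.sdiff_eq_self_iff_disjoint.2]
      rw [Finset.disjoint_left]
      intro x hx hxS
      exact (Finset.mem_sdiff.1 (hC hx)).2 hxS
    beta_reduce
    rw [h3, h4]

lemma group_sum {β : Type*} (s : Finset β) (h : β → ℕ) (k : ℕ) (G : ℕ → ℝ)
    (hb : ∀ x ∈ s, h x ≤ k) :
    ∑ x ∈ s, G (h x)
      = ∑ ℓ ∈ Finset.range (k+1), ((s.filter (fun x => h x = ℓ)).card : ℝ) * G ℓ := by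
  classical
  rw [← Finset.sum_fiberwise_of_maps_to' (g := h) (t := Finset.range (k+1))
    (fun x hx => Finset.mem_range.2 (Nat.lt_succ_of_le (hb x hx))) G]
  exact Finset.sum_congr rfl fun ℓ _ => by rw [Finset.sum_const, nsmul_eq_mul]

/-- sign function -/
def gg (r : ℕ) : ℕ → ℝ := fun ℓ => if r < 2*ℓ then 1 else if 2*ℓ < r then -1 else 0

/-- binomial product -/
def cc (r m : ℕ) : ℕ → ℝ := fun ℓ => (m.choose ℓ : ℝ) * (m.choose (r-ℓ) : ℝ)

lemma gg_neg (r ℓ : ℕ) (h : ℓ ≤ r) : gg r (r - ℓ) = - gg r ℓ := by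
  unfold gg
  rcases lt_trichotomy (2*ℓ) r with h1 | h1 | h1
  · rw [if_pos (by omega : r < 2*(r-ℓ)), if_neg (by omega : ¬ r < 2*ℓ), if_pos h1]; norm_num
  · rw [if_neg (by omega : ¬ r < 2*(r-ℓ)), if_neg (by omega : ¬ 2*(r-ℓ) < r),
      if_neg (by omega : ¬ r < 2*ℓ), if_neg (by omega : ¬ 2*ℓ < r)]; ring
  · rw [if_neg (by omega : ¬ r < 2*(r-ℓ)), if_pos (by omega : 2*(r-ℓ) < r), if_pos h1]

lemma cc_symm (r m ℓ : ℕ) (h : ℓ ≤ r) : cc r m (r - ℓ) = cc r m ℓ := by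
  unfold cc
  rw [Nat.sub_sub_self h]; ring

lemma sum_gg_cc (r m : ℕ) : ∑ ℓ ∈ Finset.range (r+1), gg r ℓ * cc r m ℓ = 0 := by
  have h1 := Finset.sum_range_reflect (fun ℓ => gg r ℓ * cc r m ℓ) (r+1)
  have h2 : ∑ j ∈ Finset.range (r+1), gg r (r + 1 - 1 - j) * cc r m (r + 1 - 1 - j)
      = - ∑ j ∈ Finset.range (r+1), gg r j * cc r m j := by
    rw [← Finset.sum_neg_distrib]
    refine Finset.sum_congr rfl fun j hj => ?_
    have hjr : j ≤ r := by simpa [Nat.lt_succ_iff] using hj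
    rw [show r + 1 - 1 - j = r - j by omega, gg_neg r j hjr, cc_symm r m j hjr]; ring
  rw [h2] at h1
  linarith

lemma term_eq (r ℓ : ℕ) :
    gg r ℓ * ((ℓ:ℝ) - (((r+1)/2 : ℕ):ℝ)) = |(((r+1)/2 : ℕ):ℝ) - (ℓ:ℝ)| := by
  unfold gg
  split_ifs with h1 h2
  · have hk : ((r+1)/2 : ℕ) ≤ ℓ := by omega
    have hk' : ((((r+1)/2 : ℕ)):ℝ) ≤ (ℓ:ℝ) := by exact_mod_cast hk
    rw [abs_of_nonpos (by linarith)]; ring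
  · have hk : ℓ < ((r+1)/2 : ℕ) := by omega
    have hk' : ((ℓ:ℕ):ℝ) < ((((r+1)/2 : ℕ)):ℝ) := by exact_mod_cast hk
    rw [abs_of_nonneg (by linarith)]; ring
  · have hk : ((r+1)/2 : ℕ) = ℓ := by omega
    rw [hk]; simp

lemma sum_T (r m : ℕ) :
    ∑ ℓ ∈ Finset.range (r+1), gg r ℓ * (ℓ:ℝ) * cc r m ℓ
      = ∑ ℓ ∈ Finset.range (r+1), |(((r+1)/2 : ℕ):ℝ) - (ℓ:ℝ)| * cc r m ℓ := by
  have h1 : ∑ ℓ ∈ Finset.range (r+1), gg r ℓ * (ℓ:ℝ) * cc r m ℓ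
      = (∑ ℓ ∈ Finset.range (r+1), (gg r ℓ * ((ℓ:ℝ) - (((r+1)/2 : ℕ):ℝ))) * cc r m ℓ)
        + (((r+1)/2 : ℕ):ℝ) * ∑ ℓ ∈ Finset.range (r+1), gg r ℓ * cc r m ℓ := by
    rw [Finset.mul_sum, ← Finset.sum_add_distrib]
    exact Finset.sum_congr rfl fun ℓ _ => by ring
  rw [h1, sum_gg_cc, mul_zero, add_zero]
  exact Finset.sum_congr rfl fun ℓ _ => by rw [term_eq]

lemma nat_id (m j : ℕ) (hm : 0 < m) : m * (m-1).choose j = m.choose (j+1) * (j+1) := by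
  obtain ⟨m', rfl⟩ : ∃ m', m = m' + 1 := ⟨m-1, by omega⟩
  simpa using Nat.add_one_mul_choose_eq m' j

/-- for n even, the equipartition-majority function f (f(A) = ±1
according to whether |A ∩ V₁| is more or less than r/2, 0 on ties, where V₁ is a
fixed half of the vertices) sums to 0 and each vertex sum has absolute value
(2/n)·Σ_{ℓ=0}^r |⌈r/2⌉-ℓ|·C(n/2,ℓ)·C(n/2,r-ℓ). -/
theorem stmt18 {n r : ℕ} (hne : Even n) (hn : 0 < n) (hr : 1 ≤ r)
    (f : Finset (Fin n) → ℝ)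
    (hf : ∀ A : Finset (Fin n),
      f A = if r < 2 * (A ∩ Finset.univ.filter (fun v : Fin n => (v : ℕ) < n / 2)).card
        then 1
        else if 2 * (A ∩ Finset.univ.filter (fun v : Fin n => (v : ℕ) < n / 2)).card < r
        then -1 else 0) :
    (∑ A ∈ Edges n r, f A = 0) ∧
    ∀ v : Fin n,
      |∑ A ∈ (Edges n r).filter (fun A => v ∈ A), f A|
        = (2 / (n : ℝ)) * ∑ ℓ ∈ Finset.range (r + 1),
            |(((r + 1) / 2 : ℕ) : ℝ) - ℓ|
              * ((n / 2).choose ℓ : ℝ) * ((n / 2).choose (r - ℓ) : ℝ) := by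
  classical
  obtain ⟨m, hm⟩ := hne
  have hm2 : n / 2 = m := by omega
  have hmpos : 0 < m := by omega
  set V₁ := Finset.univ.filter (fun v : Fin n => (v : ℕ) < n / 2) with hV₁def
  have hV₁card : V₁.card = m := by
    have himg : V₁.image (fun v : Fin n => (v : ℕ)) = Finset.range m := by
      ext x
      simp only [Finset.mem_image, hV₁def, Finset.mem_filter, Finset.mem_univ, true_and,
        Finset.mem_range]
      constructor
      · rintro ⟨v, hv, rfl⟩; omega
      · intro hx; exact ⟨⟨x, by omega⟩, by simpa using (by omega : x < n / 2), rfl⟩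
    have := Finset.card_image_of_injective V₁ (Fin.val_injective)
    rw [himg, Finset.card_range] at this
    omega
  have hV₁ccard : ((Finset.univ : Finset (Fin n)) \ V₁).card = m := by
    rw [Finset.card_sdiff_of_subset (Finset.subset_univ _), Finset.card_univ, Fintype.card_fin, hV₁card]
    omega
  have hfg : ∀ A, f A = gg r ((A ∩ V₁).card) := fun A => hf A
  have hbound : ∀ A ∈ Finset.powersetCard r (Finset.univ : Finset (Fin n)),
      (A ∩ V₁).card ≤ r := by
    intro A hA
    rw [Finset.mem_powersetCard] at hA
    exact hA.2 ▸ Finset.card_le_card Finset.inter_subset_left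
  have htot : ∑ A ∈ Edges n r, f A = ∑ ℓ ∈ Finset.range (r+1), gg r ℓ * cc r m ℓ := by
    calc ∑ A ∈ Edges n r, f A
        = ∑ A ∈ Finset.powersetCard r (Finset.univ : Finset (Fin n)),
            gg r ((A ∩ V₁).card) := Finset.sum_congr rfl fun A _ => hfg A
      _ = ∑ ℓ ∈ Finset.range (r+1),
            (((Finset.powersetCard r (Finset.univ : Finset (Fin n))).filter
              (fun A => (A ∩ V₁).card = ℓ)).card : ℝ) * gg r ℓ :=
          group_sum _ _ r (gg r) hbound
      _ = ∑ ℓ ∈ Finset.range (r+1), gg r ℓ * cc r m ℓ := by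
          refine Finset.sum_congr rfl fun ℓ hℓ => ?_
          rw [count_gen Finset.univ V₁ (Finset.subset_univ _) r ℓ
            (by simp only [Finset.mem_range] at hℓ; omega), hV₁card, hV₁ccard]
          unfold cc
          push_cast
          ring
  have part1 : ∑ A ∈ Edges n r, f A = 0 := by rw [htot, sum_gg_cc]
  refine ⟨part1, fun v => ?_⟩
  have hbij : ∑ A ∈ (Edges n r).filter (fun A => v ∈ A), f A
      = ∑ B ∈ Finset.powersetCard (r-1) (Finset.univ.erase v), f (insert v B) := by
    refine Finset.sum_nbij' (fun A => A.erase v) (fun B => insert v B) ?_ ?_ ?_ ?_ ?_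
    · intro A hA
      simp only [Edges, Finset.mem_filter, Finset.mem_powersetCard] at hA
      obtain ⟨⟨-, hAc⟩, hvA⟩ := hA
      rw [Finset.mem_powersetCard]
      exact ⟨Finset.erase_subset_erase v (Finset.subset_univ A),
        by rw [Finset.card_erase_of_mem hvA, hAc]⟩
    · intro B hB
      rw [Finset.mem_powersetCard] at hB
      have hvB : v ∉ B := fun h => (Finset.mem_erase.1 (hB.1 h)).1 rfl
      simp only [Edges, Finset.mem_filter, Finset.mem_powersetCard]
      exact ⟨⟨Finset.subset_univ _,
        by rw [Finset.card_insert_of_notMem hvB, hB.2]; omega⟩,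
        Finset.mem_insert_self v B⟩
    · intro A hA
      simp only [Edges, Finset.mem_filter] at hA
      exact Finset.insert_erase hA.2
    · intro B hB
      rw [Finset.mem_powersetCard] at hB
      exact Finset.erase_insert (fun h => (Finset.mem_erase.1 (hB.1 h)).1 rfl)
    · intro A hA
      simp only [Edges, Finset.mem_filter] at hA
      rw [Finset.insert_erase hA.2]
  set S := ∑ B ∈ Finset.powersetCard (r-1) (Finset.univ.erase v), f (insert v B) with hS
  set T := ∑ ℓ ∈ Finset.range (r+1), gg r ℓ * (ℓ:ℝ) * cc r m ℓ with hT
  have hmS' : ((m:ℝ) * S = T) ∨ ((m:ℝ) * S = -T) := by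
    by_cases hv : (v : ℕ) < n / 2
    · left
      have hvV : v ∈ V₁ := by simp [hV₁def, hv]
      have key : ∀ B ∈ Finset.powersetCard (r-1) (Finset.univ.erase v),
          f (insert v B) = gg r ((B ∩ V₁.erase v).card + 1) := by
        intro B hB
        rw [Finset.mem_powersetCard] at hB
        have hvB : v ∉ B := fun h => (Finset.mem_erase.1 (hB.1 h)).1 rfl
        rw [hfg]
        congr 1
        have heq : insert v B ∩ V₁ = insert v (B ∩ V₁.erase v) := by
          ext x
          by_cases hx : x = v
          · subst hx; simp [hvV]
          · simp only [Finset.mem_inter, Finset.mem_insert, Finset.mem_erase, hx,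
              false_or]
            tauto
        rw [heq, Finset.card_insert_of_notMem (fun h => hvB (Finset.mem_inter.1 h).1)]
      have hsub : V₁.erase v ⊆ Finset.univ.erase v :=
        Finset.erase_subset_erase v (Finset.subset_univ V₁)
      have hdiffeq : (Finset.univ.erase v) \ (V₁.erase v)
          = (Finset.univ : Finset (Fin n)) \ V₁ := by
        ext x
        by_cases hx : x = v
        · subst hx; simp [hvV]
        · simp [Finset.mem_erase, Finset.mem_sdiff, hx]
      have hbound2 : ∀ B ∈ Finset.powersetCard (r-1) (Finset.univ.erase v),
          (B ∩ V₁.erase v).card ≤ r - 1 := by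
        intro B hB
        rw [Finset.mem_powersetCard] at hB
        exact hB.2 ▸ Finset.card_le_card Finset.inter_subset_left
      have hSe : S = ∑ j ∈ Finset.range r,
          (((m-1).choose j * m.choose (r-1-j) : ℕ) : ℝ) * gg r (j+1) := by
        have e1 : S = ∑ B ∈ Finset.powersetCard (r-1) (Finset.univ.erase v),
            gg r ((B ∩ V₁.erase v).card + 1) := Finset.sum_congr rfl key
        have e2 : ∑ B ∈ Finset.powersetCard (r-1) (Finset.univ.erase v),
            gg r ((B ∩ V₁.erase v).card + 1)
          = ∑ j ∈ Finset.range (r-1+1),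
              (((Finset.powersetCard (r-1) (Finset.univ.erase v)).filter
                (fun B => (B ∩ V₁.erase v).card = j)).card : ℝ) * gg r (j+1) :=
          group_sum _ _ (r-1) (fun j => gg r (j+1)) hbound2
        rw [e1, e2, show r - 1 + 1 = r from by omega]
        refine Finset.sum_congr rfl fun j hj => ?_
        rw [count_gen _ _ hsub (r-1) j
          (by simp only [Finset.mem_range] at hj; omega), hdiffeq, hV₁ccard,
          Finset.card_erase_of_mem hvV, hV₁card]
      rw [hSe, Finset.mul_sum, hT, Finset.sum_range_succ']
      simp only [Nat.cast_zero, mul_zero, zero_mul, add_zero]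
      refine Finset.sum_congr rfl fun j hj => ?_
      have hnat : m * (m-1).choose j = m.choose (j+1) * (j+1) := nat_id m j hmpos
      have hnatR : (m:ℝ) * ((m-1).choose j : ℝ)
          = (m.choose (j+1) : ℝ) * ((j:ℝ)+1) := by exact_mod_cast hnat
      rw [show r - 1 - j = r - (j+1) from by omega]
      unfold cc
      push_cast
      linear_combination (gg r (j+1) * ((m.choose (r-(j+1)) : ℕ) : ℝ)) * hnatR
    · right
      have hvV : v ∉ V₁ := by simp [hV₁def, hv]
      have hsub : V₁ ⊆ Finset.univ.erase v := fun w hw =>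
        Finset.mem_erase.2 ⟨fun h => hvV (h ▸ hw), Finset.mem_univ w⟩
      have key : ∀ B ∈ Finset.powersetCard (r-1) (Finset.univ.erase v),
          f (insert v B) = gg r ((B ∩ V₁).card) := by
        intro B hB
        rw [hfg]
        congr 1
        have heq : insert v B ∩ V₁ = B ∩ V₁ := by
          ext x
          by_cases hx : x = v
          · subst hx; simp [hvV]
          · simp [hx]
        rw [heq]
      have hdiffcard : ((Finset.univ.erase v) \ V₁).card = m - 1 := by
        rw [Finset.card_sdiff_of_subset hsub, Finset.card_erase_of_mem (Finset.mem_univ v),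
          Finset.card_univ, Fintype.card_fin, hV₁card]
        omega
      have hbound2 : ∀ B ∈ Finset.powersetCard (r-1) (Finset.univ.erase v),
          (B ∩ V₁).card ≤ r - 1 := by
        intro B hB
        rw [Finset.mem_powersetCard] at hB
        exact hB.2 ▸ Finset.card_le_card Finset.inter_subset_left
      have hSe : S = ∑ ℓ ∈ Finset.range r,
          ((m.choose ℓ * (m-1).choose (r-1-ℓ) : ℕ) : ℝ) * gg r ℓ := by
        have e1 : S = ∑ B ∈ Finset.powersetCard (r-1) (Finset.univ.erase v),
            gg r ((B ∩ V₁).card) := Finset.sum_congr rfl key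
        have e2 : ∑ B ∈ Finset.powersetCard (r-1) (Finset.univ.erase v),
            gg r ((B ∩ V₁).card)
          = ∑ ℓ ∈ Finset.range (r-1+1),
              (((Finset.powersetCard (r-1) (Finset.univ.erase v)).filter
                (fun B => (B ∩ V₁).card = ℓ)).card : ℝ) * gg r ℓ :=
          group_sum _ _ (r-1) (gg r) hbound2
        rw [e1, e2, show r - 1 + 1 = r from by omega]
        refine Finset.sum_congr rfl fun ℓ hℓ => ?_
        rw [count_gen _ _ hsub (r-1) ℓ
          (by simp only [Finset.mem_range] at hℓ; omega), hdiffcard, hV₁card]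
      rw [hSe, Finset.mul_sum]
      have step1 : ∀ ℓ ∈ Finset.range r,
          (m:ℝ) * ((((m.choose ℓ * (m-1).choose (r-1-ℓ)) : ℕ) : ℝ) * gg r ℓ)
            = gg r ℓ * cc r m ℓ * (((r - ℓ : ℕ)) : ℝ) := by
        intro ℓ hℓ
        have hℓr : ℓ < r := Finset.mem_range.1 hℓ
        have hnat : m * (m-1).choose (r-1-ℓ) = m.choose (r-ℓ) * (r-ℓ) := by
          have h := nat_id m (r-1-ℓ) hmpos
          rwa [show r-1-ℓ+1 = r-ℓ from by omega] at h
        have hnatR : (m:ℝ) * ((m-1).choose (r-1-ℓ) : ℝ)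
            = (m.choose (r-ℓ) : ℝ) * (((r-ℓ : ℕ)) : ℝ) := by exact_mod_cast hnat
        unfold cc
        push_cast
        linear_combination (gg r ℓ * ((m.choose ℓ : ℕ) : ℝ)) * hnatR
      rw [Finset.sum_congr rfl step1]
      have ext1 : ∑ ℓ ∈ Finset.range (r+1), gg r ℓ * cc r m ℓ * (((r - ℓ : ℕ)) : ℝ)
          = ∑ ℓ ∈ Finset.range r, gg r ℓ * cc r m ℓ * (((r - ℓ : ℕ)) : ℝ) := by
        rw [Finset.sum_range_succ]
        simp
      rw [← ext1]
      have ext2 : ∀ ℓ ∈ Finset.range (r+1), gg r ℓ * cc r m ℓ * (((r - ℓ : ℕ)) : ℝ)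
          = (r:ℝ) * (gg r ℓ * cc r m ℓ) - gg r ℓ * (ℓ:ℝ) * cc r m ℓ := by
        intro ℓ hℓ
        have hle : ℓ ≤ r := by simp only [Finset.mem_range] at hℓ; omega
        rw [Nat.cast_sub hle]
        ring
      rw [Finset.sum_congr rfl ext2, Finset.sum_sub_distrib, ← Finset.mul_sum,
        sum_gg_cc, mul_zero, zero_sub, hT]
  have hTR : T = ∑ ℓ ∈ Finset.range (r+1), |(((r+1)/2 : ℕ):ℝ) - (ℓ:ℝ)| * cc r m ℓ := by
    rw [hT]; exact sum_T r m
  have hTnn : 0 ≤ T := by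
    rw [hTR]
    refine Finset.sum_nonneg fun ℓ _ => mul_nonneg (abs_nonneg _) ?_
    unfold cc
    positivity
  have hm0 : (0:ℝ) < m := by exact_mod_cast hmpos
  have habs : (m:ℝ) * |S| = T := by
    have h1 : |(m:ℝ)| * |S| = |(m:ℝ) * S| := (abs_mul _ _).symm
    rw [abs_of_pos hm0] at h1
    rw [h1]
    rcases hmS' with h | h
    · rw [h]; exact abs_of_nonneg hTnn
    · rw [h, abs_neg]; exact abs_of_nonneg hTnn
  have hgoalsum : ∑ ℓ ∈ Finset.range (r+1),
      |(((r+1)/2 : ℕ):ℝ) - (ℓ:ℝ)| * ((n/2).choose ℓ : ℝ) * ((n/2).choose (r-ℓ) : ℝ)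
      = ∑ ℓ ∈ Finset.range (r+1), |(((r+1)/2 : ℕ):ℝ) - (ℓ:ℝ)| * cc r m ℓ := by
    refine Finset.sum_congr rfl fun ℓ _ => ?_
    rw [hm2]
    unfold cc
    ring
  rw [hbij, hgoalsum, ← hTR]
  have hn2 : (n:ℝ) = 2 * m := by rw [hm]; push_cast; ring
  have hSv : |S| = T / m := by
    rw [eq_div_iff (ne_of_gt hm0), mul_comm]
    exact habs
  rw [hSv, hn2]
  field_simp
end
end
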